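/- arXiv:2006.07131 — 4 statements merged into one kernel-verified Lean document; each statement's English description precedes it below -/
import Mathlib

section
/- For every bivariate copula C, the sequence of dyadic checkerboard approximations (CB_{2^n}(C))_{n∈ℕ} converges weakly conditional to C. Consequently, the class of all checkerboard copulas is dense in the class of all bivariate copulas with respect to weak conditional convergence. -/
open MeasureTheory Filter Set
open scoped ENNReal

noncomputable section

/-- `C` is a bivariate copula (all conditions imposed on the unit square `[0,1]²`). -/
def IsCopula (C : ℝ → ℝ → ℝ) : Prop :=
  (∀ x ∈ Set.Icc (0:ℝ) 1, C x 0 = 0 ∧ C 0 x = 0 ∧ C x 1 = x ∧ C 1 x = x) ∧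
    ∀ x₁ ∈ Set.Icc (0:ℝ) 1, ∀ x₂ ∈ Set.Icc (0:ℝ) 1, ∀ y₁ ∈ Set.Icc (0:ℝ) 1,
      ∀ y₂ ∈ Set.Icc (0:ℝ) 1, x₁ ≤ x₂ → y₁ ≤ y₂ →
        0 ≤ C x₂ y₂ - C x₂ y₁ - C x₁ y₂ + C x₁ y₁

/-- `K` (as conditional distribution function `(x,y) ↦ K(x,[0,y])`) is a Markov kernel of
the copula `C`, i.e. a regular conditional distribution of the second coordinate given the
first under `μ_C`: for each `x ∈ [0,1]`, `K x` is the distribution function of a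
probability measure on `[0,1]`, `x ↦ K x y` is measurable, and the disintegration identity
`∫_{[0,a]} K(t,[0,y]) dλ(t) = μ_C([0,a] × [0,y]) = C(a,y)` holds. -/
structure IsMarkovKernelOf (C : ℝ → ℝ → ℝ) (K : ℝ → ℝ → ℝ) : Prop where
  meas : ∀ y ∈ Set.Icc (0:ℝ) 1, Measurable fun x => K x y
  mono : ∀ x ∈ Set.Icc (0:ℝ) 1, MonotoneOn (K x) (Set.Icc (0:ℝ) 1)
  nonneg : ∀ x ∈ Set.Icc (0:ℝ) 1, ∀ y ∈ Set.Icc (0:ℝ) 1, 0 ≤ K x y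
  apply_one : ∀ x ∈ Set.Icc (0:ℝ) 1, K x 1 = 1
  disint : ∀ a ∈ Set.Icc (0:ℝ) 1, ∀ y ∈ Set.Icc (0:ℝ) 1,
    ∫ t in Set.Icc (0:ℝ) a, K t y = C a y

/-- Weak conditional convergence of a sequence of copulas, in terms of their conditional
distribution functions: for λ-a.e. `x ∈ [0,1]` the measures `K_{C_n}(x,·)` converge weakly
to `K_C(x,·)`, i.e. the conditional distribution functions converge at every continuity
point of `y ↦ K_C(x,[0,y])` in `[0,1]`. -/
def WeakCondConv (Kseq : ℕ → ℝ → ℝ → ℝ) (K : ℝ → ℝ → ℝ) : Prop :=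
  ∀ᵐ x ∂(volume.restrict (Set.Icc (0:ℝ) 1)),
    ∀ y ∈ Set.Icc (0:ℝ) 1, ContinuousWithinAt (fun t => K x t) (Set.Icc 0 1) y →
      Filter.Tendsto (fun n => Kseq n x y) Filter.atTop (nhds (K x y))

/-- `D` is a checkerboard copula of resolution `N`: its doubly stochastic measure spreads
mass uniformly on each of the `N²` grid squares; equivalently, `D` is a copula which is
bilinear on each grid cell (bilinear interpolation of its values at the grid points). -/
def IsCheckerboard (D : ℝ → ℝ → ℝ) (N : ℕ) : Prop :=
  IsCopula D ∧ 0 < N ∧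
    ∀ i < N, ∀ j < N, ∀ x ∈ Set.Icc ((i:ℝ)/N) (((i:ℝ)+1)/N),
      ∀ y ∈ Set.Icc ((j:ℝ)/N) (((j:ℝ)+1)/N),
        D x y =
          D ((i:ℝ)/N) ((j:ℝ)/N) * (1 - ((N:ℝ)*x - i)) * (1 - ((N:ℝ)*y - j))
          + D (((i:ℝ)+1)/N) ((j:ℝ)/N) * ((N:ℝ)*x - i) * (1 - ((N:ℝ)*y - j))
          + D ((i:ℝ)/N) (((j:ℝ)+1)/N) * (1 - ((N:ℝ)*x - i)) * ((N:ℝ)*y - j)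
          + D (((i:ℝ)+1)/N) (((j:ℝ)+1)/N) * ((N:ℝ)*x - i) * ((N:ℝ)*y - j)

/-- `D` is the `N`-checkerboard approximation `CB_N(C)` of the copula `C`: `D` is a
checkerboard copula of resolution `N` whose doubly stochastic measure assigns to each grid
square the same mass as `μ_C`, i.e. `D` and `C` agree at all grid points. -/
def IsCheckerboardApprox (C D : ℝ → ℝ → ℝ) (N : ℕ) : Prop :=
  IsCheckerboard D N ∧
    ∀ i ≤ N, ∀ j ≤ N, D ((i:ℝ)/N) ((j:ℝ)/N) = C ((i:ℝ)/N) ((j:ℝ)/N)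

/-!
For a.e. `x`, `K(x, y)` is the derivative of `C(·, y)` at `x`, so by Lebesgue's differentiation
theorem it is the limit of the difference quotients of `C(·, y)` over the grid cells of mesh
`2^{-n}` containing `x`. A checkerboard copula is affine in `x` on each cell, so its Markov kernels
are, a.e., exactly these cell difference quotients; at a dyadic `y` the quotients of `CB_{2^n}(C)`
and of `C` coincide once `n` is large. Hence `K_{CB_{2^n}(C)}(x, y) → K(x, y)` for all dyadic `y`,
and monotonicity in `y` carries the convergence over to every continuity point of `K(x, ·)`.
-/

open scoped Topology

section Grid

variable {N : ℕ} {x : ℝ}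

/-- The cell `[i/N, (i+1)/N]` containing `x`; the point `1` lies in the last cell, `i = N - 1`. -/
def cellIndex (N : ℕ) (x : ℝ) : ℕ := min (N - 1) ⌊(N : ℝ) * x⌋₊

def cellLeft (N : ℕ) (x : ℝ) : ℝ := cellIndex N x / N

def cellRight (N : ℕ) (x : ℝ) : ℝ := (cellIndex N x + 1) / N

lemma cellIndex_lt (hN : 0 < N) (x : ℝ) : cellIndex N x < N :=
  (min_le_left _ _).trans_lt (Nat.sub_lt hN one_pos)

lemma cellIndex_le_mul (hx : 0 ≤ x) : (cellIndex N x : ℝ) ≤ N * x :=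
  (Nat.cast_le.2 (min_le_right _ _)).trans (Nat.floor_le (by positivity))

lemma mul_le_cellIndex_add_one (hN : 0 < N) (hx : x ≤ 1) :
    (N : ℝ) * x ≤ cellIndex N x + 1 := by
  rcases le_total ⌊(N : ℝ) * x⌋₊ (N - 1) with h | h
  · rw [cellIndex, min_eq_right h]
    exact (Nat.lt_floor_add_one _).le
  · rw [cellIndex, min_eq_left h, Nat.cast_sub hN, Nat.cast_one, sub_add_cancel]
    exact mul_le_of_le_one_right (Nat.cast_nonneg _) hx

lemma cellIndex_mono : Monotone (cellIndex N) := fun _ _ h =>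
  min_le_min le_rfl (Nat.floor_le_floor (mul_le_mul_of_nonneg_left h (Nat.cast_nonneg _)))

lemma cellIndex_eq {i : ℕ} (hi : i < N) (h₁ : (i : ℝ) / N ≤ x) (h₂ : x < ((i : ℝ) + 1) / N) :
    cellIndex N x = i := by
  have hN : (0 : ℝ) < N := by exact_mod_cast (Nat.zero_le i).trans_lt hi
  rw [div_le_iff₀' hN] at h₁
  rw [lt_div_iff₀' hN] at h₂
  rw [cellIndex, (Nat.floor_eq_iff ((Nat.cast_nonneg i).trans h₁)).2 ⟨h₁, h₂⟩]
  exact min_eq_right (by omega)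

lemma cellIndex_natCast_div {k : ℕ} (hk : k < N) : cellIndex N (k / N) = k :=
  cellIndex_eq hk le_rfl
    (div_lt_div_of_pos_right (lt_add_one _) (by exact_mod_cast (Nat.zero_le k).trans_lt hk))

lemma cellIndex_zero : cellIndex N 0 = 0 := by simp [cellIndex]

lemma measurable_cellIndex : Measurable (cellIndex N) :=
  measurable_from_top.comp (Nat.measurable_floor.comp (measurable_const_mul _))

lemma cellLeft_le (hx : 0 ≤ x) : cellLeft N x ≤ x :=
  div_le_of_le_mul₀ (Nat.cast_nonneg _) hx (by rw [mul_comm]; exact cellIndex_le_mul hx)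

lemma le_cellRight (hN : 0 < N) (hx : x ≤ 1) : x ≤ cellRight N x :=
  (le_div_iff₀' (by exact_mod_cast hN)).2 (mul_le_cellIndex_add_one hN hx)

lemma cellRight_sub_cellLeft (N : ℕ) (x : ℝ) : cellRight N x - cellLeft N x = (N : ℝ)⁻¹ := by
  rw [cellRight, cellLeft, ← sub_div, add_sub_cancel_left, one_div]

lemma cellLeft_mem_Icc (hN : 0 < N) (x : ℝ) : cellLeft N x ∈ Icc (0 : ℝ) 1 :=
  ⟨by unfold cellLeft; positivity,
    div_le_one_of_le₀ (by exact_mod_cast (cellIndex_lt hN x).le) (Nat.cast_nonneg _)⟩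

lemma cellRight_mem_Icc (hN : 0 < N) (x : ℝ) : cellRight N x ∈ Icc (0 : ℝ) 1 :=
  ⟨by unfold cellRight; positivity,
    div_le_one_of_le₀ (by exact_mod_cast cellIndex_lt hN x) (Nat.cast_nonneg _)⟩

lemma natCast_div_le_add_one_div (i N : ℕ) : (i : ℝ) / N ≤ ((i : ℝ) + 1) / N :=
  div_le_div_of_nonneg_right (lt_add_one _).le (Nat.cast_nonneg _)

lemma cellLeft_le_cellRight (N : ℕ) (x : ℝ) : cellLeft N x ≤ cellRight N x :=
  natCast_div_le_add_one_div _ _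

lemma tendsto_natCast_inv {N : ℕ → ℕ} (hN : Tendsto N atTop atTop) :
    Tendsto (fun n => ((N n : ℝ))⁻¹) atTop (𝓝 0) :=
  tendsto_inv_atTop_zero.comp (tendsto_natCast_atTop_atTop.comp hN)

lemma tendsto_cellLeft {N : ℕ → ℕ} (hN₀ : ∀ n, 0 < N n) (hN : Tendsto N atTop atTop)
    (hx : x ∈ Icc (0 : ℝ) 1) : Tendsto (fun n => cellLeft (N n) x) atTop (𝓝 x) := by
  have hlow : Tendsto (fun n => x - ((N n : ℝ))⁻¹) atTop (𝓝 x) := by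
    simpa using tendsto_const_nhds.sub (tendsto_natCast_inv hN)
  refine tendsto_of_tendsto_of_tendsto_of_le_of_le hlow tendsto_const_nhds (fun n => ?_)
    (fun n => cellLeft_le hx.1)
  linarith [cellRight_sub_cellLeft (N n) x, le_cellRight (hN₀ n) hx.2]

lemma tendsto_cellRight {N : ℕ → ℕ} (hN₀ : ∀ n, 0 < N n) (hN : Tendsto N atTop atTop)
    (hx : x ∈ Icc (0 : ℝ) 1) : Tendsto (fun n => cellRight (N n) x) atTop (𝓝 x) := by
  have hup : Tendsto (fun n => x + ((N n : ℝ))⁻¹) atTop (𝓝 x) := by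
    simpa using tendsto_const_nhds.add (tendsto_natCast_inv hN)
  refine tendsto_of_tendsto_of_tendsto_of_le_of_le tendsto_const_nhds hup
    (fun n => le_cellRight (hN₀ n) hx.2) (fun n => ?_)
  linarith [cellRight_sub_cellLeft (N n) x, cellLeft_le (N := N n) hx.1]

end Grid

section Interpolation

variable {N : ℕ} {g : ℕ → ℝ} {y : ℝ}

def gridInterp (N : ℕ) (g : ℕ → ℝ) (y : ℝ) : ℝ :=
  (1 - (N * y - cellIndex N y)) * g (cellIndex N y)
    + (N * y - cellIndex N y) * g (cellIndex N y + 1)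

lemma gridInterp_natCast_div (hN : 0 < N) {k : ℕ} (hk : k ≤ N) (g : ℕ → ℝ) :
    gridInterp N g (k / N) = g k := by
  have hN' : (N : ℝ) ≠ 0 := by positivity
  rcases hk.lt_or_eq with hk | rfl
  · rw [gridInterp, cellIndex_natCast_div hk, mul_div_cancel₀ _ hN']
    ring
  · have hidx : cellIndex k (k / k) = k - 1 := by simp [cellIndex, div_self hN']
    rw [gridInterp, hidx, div_self hN', Nat.sub_add_cancel hN, Nat.cast_sub hN]
    ring

lemma gridInterp_of_mem_Icc {i : ℕ} (hi : i < N)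
    (hy : y ∈ Icc ((i : ℝ) / N) (((i : ℝ) + 1) / N)) (g : ℕ → ℝ) :
    gridInterp N g y = (1 - (N * y - i)) * g i + (N * y - i) * g (i + 1) := by
  rcases hy.2.lt_or_eq with hlt | rfl
  · rw [gridInterp, cellIndex_eq hi hy.1 hlt]
  · have hN : (N : ℝ) ≠ 0 := by exact_mod_cast ((Nat.zero_le i).trans_lt hi).ne'
    rw [← Nat.cast_add_one, gridInterp_natCast_div ((Nat.zero_le i).trans_lt hi) hi,
      Nat.cast_add_one, mul_div_cancel₀ _ hN]
    ring

lemma gridInterp_zero (g : ℕ → ℝ) : gridInterp N g 0 = g 0 := by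
  simp [gridInterp, cellIndex_zero]

lemma gridInterp_one (hN : 0 < N) (g : ℕ → ℝ) : gridInterp N g 1 = g N := by
  have hN' : (N : ℝ) ≠ 0 := by positivity
  simpa [div_self hN'] using gridInterp_natCast_div hN le_rfl g

lemma gridInterp_congr (hN : 0 < N) {g' : ℕ → ℝ} (h : ∀ k ≤ N, g k = g' k) (y : ℝ) :
    gridInterp N g y = gridInterp N g' y := by
  have hk := cellIndex_lt hN y
  rw [gridInterp, gridInterp, h _ hk.le, h _ hk]

lemma gridInterp_sub (g g' : ℕ → ℝ) (y : ℝ) :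
    gridInterp N (fun k => g k - g' k) y = gridInterp N g y - gridInterp N g' y := by
  simp only [gridInterp]
  ring

lemma gridInterp_const (c y : ℝ) : gridInterp N (fun _ => c) y = c := by
  simp only [gridInterp]
  ring

lemma gridInterp_natCast_div_self (hN : 0 < N) (y : ℝ) :
    gridInterp N (fun k => (k : ℝ) / N) y = y := by
  have hN' : (N : ℝ) ≠ 0 := by positivity
  simp only [gridInterp]
  field_simp
  push_cast
  ring

lemma monotoneOn_gridInterp (hN : 0 < N) (hg : MonotoneOn g (Iic N)) :
    MonotoneOn (gridInterp N g) (Icc 0 1) := by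
  intro y₁ hy₁ y₂ hy₂ hy
  have hmul : (N : ℝ) * y₁ ≤ N * y₂ := mul_le_mul_of_nonneg_left hy (Nat.cast_nonneg _)
  have hg' : ∀ {a b : ℕ}, a ≤ b → b ≤ N → g a ≤ g b := fun hab hb =>
    hg (mem_Iic.2 (hab.trans hb)) (mem_Iic.2 hb) hab
  have h₁ := cellIndex_lt hN y₁
  have h₂ := cellIndex_lt hN y₂
  have hstep₁ : g (cellIndex N y₁) ≤ g (cellIndex N y₁ + 1) := hg' (Nat.le_succ _) h₁
  have hstep₂ : g (cellIndex N y₂) ≤ g (cellIndex N y₂ + 1) := hg' (Nat.le_succ _) h₂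
  have hlo₁ := cellIndex_le_mul (N := N) hy₁.1
  have hlo₂ := cellIndex_le_mul (N := N) hy₂.1
  have hhi₁ := mul_le_cellIndex_add_one hN hy₁.2
  have hhi₂ := mul_le_cellIndex_add_one hN hy₂.2
  -- Either a node separates `y₁` from `y₂`, or both lie in one cell, where the interpolant is
  -- affine with slope `N * (g (i + 1) - g i) ≥ 0`.
  rcases (cellIndex_mono hy : cellIndex N y₁ ≤ cellIndex N y₂).lt_or_eq with hlt | heq
  · have hmid : g (cellIndex N y₁ + 1) ≤ g (cellIndex N y₂) := hg' hlt h₂.le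
    simp only [gridInterp]
    nlinarith
  · simp only [gridInterp, ← heq] at *
    nlinarith

end Interpolation

lemma natCast_div_mem_Icc {k N : ℕ} (hk : k ≤ N) : (k : ℝ) / N ∈ Icc (0 : ℝ) 1 :=
  ⟨by positivity, div_le_one_of_le₀ (by exact_mod_cast hk) (Nat.cast_nonneg _)⟩

lemma monotone_natCast_div (N : ℕ) : Monotone fun k : ℕ => (k : ℝ) / N :=
  fun _ _ h => div_le_div_of_nonneg_right (Nat.cast_le.2 h) (Nat.cast_nonneg _)

namespace IsCopula

variable {C : ℝ → ℝ → ℝ}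

lemma monotoneOn_sub (hC : IsCopula C) {x₁ x₂ : ℝ} (hx₁ : x₁ ∈ Icc (0 : ℝ) 1)
    (hx₂ : x₂ ∈ Icc (0 : ℝ) 1) (hx : x₁ ≤ x₂) :
    MonotoneOn (fun y => C x₂ y - C x₁ y) (Icc 0 1) := by
  intro y₁ hy₁ y₂ hy₂ hy
  have := hC.2 x₁ hx₁ x₂ hx₂ y₁ hy₁ y₂ hy₂ hx hy
  dsimp only
  linarith

lemma sub_nonneg (hC : IsCopula C) {x₁ x₂ y : ℝ} (hx₁ : x₁ ∈ Icc (0 : ℝ) 1)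
    (hx₂ : x₂ ∈ Icc (0 : ℝ) 1) (hx : x₁ ≤ x₂) (hy : y ∈ Icc (0 : ℝ) 1) :
    0 ≤ C x₂ y - C x₁ y := by
  have := hC.monotoneOn_sub hx₁ hx₂ hx ⟨le_rfl, zero_le_one⟩ hy hy.1
  simpa [(hC.1 x₁ hx₁).1, (hC.1 x₂ hx₂).1] using this

end IsCopula

section Construction

variable {C : ℝ → ℝ → ℝ} {N : ℕ}

def checkerboard (C : ℝ → ℝ → ℝ) (N : ℕ) (x y : ℝ) : ℝ :=
  gridInterp N (fun k => gridInterp N (fun l => C (k / N) (l / N)) y) x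

lemma checkerboard_natCast_div (hN : 0 < N) {k l : ℕ} (hk : k ≤ N) (hl : l ≤ N) :
    checkerboard C N (k / N) (l / N) = C (k / N) (l / N) := by
  rw [checkerboard, gridInterp_natCast_div hN hk, gridInterp_natCast_div hN hl]

lemma IsCopula.monotoneOn_checkerboard_sub (hC : IsCopula C) (hN : 0 < N) {y₁ y₂ : ℝ}
    (hy₁ : y₁ ∈ Icc (0 : ℝ) 1) (hy₂ : y₂ ∈ Icc (0 : ℝ) 1) (hy : y₁ ≤ y₂) :
    MonotoneOn (fun x => checkerboard C N x y₂ - checkerboard C N x y₁) (Icc 0 1) := by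
  have hrow : ∀ {k₁ k₂ : ℕ}, k₂ ≤ N → k₁ ≤ k₂ →
      MonotoneOn (gridInterp N fun l => C (k₂ / N) (l / N) - C (k₁ / N) (l / N)) (Icc 0 1) :=
    fun hk₂ hk => monotoneOn_gridInterp hN <|
      (hC.monotoneOn_sub (natCast_div_mem_Icc (hk.trans hk₂)) (natCast_div_mem_Icc hk₂)
        (monotone_natCast_div N hk)).comp ((monotone_natCast_div N).monotoneOn _)
        fun _ hl => natCast_div_mem_Icc hl
  simp only [checkerboard, ← gridInterp_sub]
  refine monotoneOn_gridInterp hN fun k₁ hk₁ k₂ hk₂ hk => ?_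
  have := hrow hk₂ hk hy₁ hy₂ hy
  simp only [gridInterp_sub] at this ⊢
  linarith

lemma IsCopula.isCopula_checkerboard (hC : IsCopula C) (hN : 0 < N) :
    IsCopula (checkerboard C N) := by
  have hN' : (N : ℝ) ≠ 0 := by positivity
  refine ⟨fun x hx => ⟨?_, ?_, ?_, ?_⟩, fun x₁ hx₁ x₂ hx₂ y₁ hy₁ y₂ hy₂ hx hy => ?_⟩
  · rw [checkerboard, gridInterp_congr hN (g' := fun _ => 0), gridInterp_const]
    intro k hk
    simpa [gridInterp_zero] using (hC.1 _ (natCast_div_mem_Icc hk)).1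
  · rw [checkerboard, gridInterp_zero, gridInterp_congr hN (g' := fun _ => 0), gridInterp_const]
    intro l hl
    simpa using (hC.1 _ (natCast_div_mem_Icc hl)).2.1
  · rw [checkerboard, gridInterp_congr hN (g' := fun k => (k : ℝ) / N),
      gridInterp_natCast_div_self hN]
    intro k hk
    simpa [gridInterp_one hN, div_self hN'] using (hC.1 _ (natCast_div_mem_Icc hk)).2.2.1
  · rw [checkerboard, gridInterp_one hN, gridInterp_congr hN (g' := fun l => (l : ℝ) / N),
      gridInterp_natCast_div_self hN]
    intro l hl
    simpa [div_self hN'] using (hC.1 _ (natCast_div_mem_Icc hl)).2.2.2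
  · have := hC.monotoneOn_checkerboard_sub hN hy₁ hy₂ hy hx₁ hx₂ hx
    dsimp only at this
    linarith

lemma IsCopula.isCheckerboardApprox_checkerboard (hC : IsCopula C) (hN : 0 < N) :
    IsCheckerboardApprox C (checkerboard C N) N := by
  refine ⟨⟨hC.isCopula_checkerboard hN, hN, fun i hi j hj x hx y hy => ?_⟩,
    fun i hi j hj => checkerboard_natCast_div hN hi hj⟩
  have hi' : i + 1 ≤ N := hi
  have hj' : j + 1 ≤ N := hj
  simp only [← Nat.cast_add_one, checkerboard_natCast_div hN hi.le hj.le,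
    checkerboard_natCast_div hN hi' hj.le, checkerboard_natCast_div hN hi.le hj',
    checkerboard_natCast_div hN hi' hj']
  rw [checkerboard, gridInterp_of_mem_Icc hi hx, gridInterp_of_mem_Icc hj hy,
    gridInterp_of_mem_Icc hj hy]
  push_cast
  ring

end Construction

section CellSlope

variable {C D : ℝ → ℝ → ℝ} {N : ℕ}

def cellSlope (D : ℝ → ℝ → ℝ) (N : ℕ) (x y : ℝ) : ℝ :=
  N * (D (cellRight N x) y - D (cellLeft N x) y)

lemma measurable_cellSlope (D : ℝ → ℝ → ℝ) (N : ℕ) (y : ℝ) :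
    Measurable fun x => cellSlope D N x y :=
  (measurable_from_top (f := fun k : ℕ => (N : ℝ) * (D ((k + 1) / N) y - D (k / N) y))).comp
    measurable_cellIndex

lemma integrableOn_Icc_of_mem_Icc {f : ℝ → ℝ} (hf : Measurable f)
    (h : ∀ t ∈ Icc (0 : ℝ) 1, f t ∈ Icc (0 : ℝ) 1) : IntegrableOn f (Icc 0 1) := by
  refine Measure.integrableOn_of_bounded (M := 1) (by simp) hf.aestronglyMeasurable ?_
  filter_upwards [ae_restrict_mem measurableSet_Icc] with t ht
  rw [Real.norm_eq_abs, abs_le]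
  exact ⟨by linarith [(h t ht).1], (h t ht).2⟩

namespace IsCopula

lemma monotoneOn_cellSlope (hC : IsCopula C) (hN : 0 < N) (x : ℝ) :
    MonotoneOn (cellSlope C N x) (Icc 0 1) := fun _ hy₁ _ hy₂ hy =>
  mul_le_mul_of_nonneg_left (hC.monotoneOn_sub (cellLeft_mem_Icc hN x) (cellRight_mem_Icc hN x)
    (cellLeft_le_cellRight N x) hy₁ hy₂ hy) (Nat.cast_nonneg _)

lemma cellSlope_nonneg (hC : IsCopula C) (hN : 0 < N) (x : ℝ) {y : ℝ}
    (hy : y ∈ Icc (0 : ℝ) 1) : 0 ≤ cellSlope C N x y :=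
  mul_nonneg (Nat.cast_nonneg _) (hC.sub_nonneg (cellLeft_mem_Icc hN x) (cellRight_mem_Icc hN x)
    (cellLeft_le_cellRight N x) hy)

lemma cellSlope_one (hC : IsCopula C) (hN : 0 < N) (x : ℝ) : cellSlope C N x 1 = 1 := by
  rw [cellSlope, (hC.1 _ (cellRight_mem_Icc hN x)).2.2.1,
    (hC.1 _ (cellLeft_mem_Icc hN x)).2.2.1, cellRight_sub_cellLeft, mul_inv_cancel₀ (by positivity)]

lemma cellSlope_mem_Icc (hC : IsCopula C) (hN : 0 < N) (x : ℝ) {y : ℝ}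
    (hy : y ∈ Icc (0 : ℝ) 1) : cellSlope C N x y ∈ Icc (0 : ℝ) 1 :=
  ⟨hC.cellSlope_nonneg hN x hy,
    hC.cellSlope_one hN x ▸ hC.monotoneOn_cellSlope hN x hy ⟨zero_le_one, le_rfl⟩ hy.2⟩

end IsCopula

namespace IsCheckerboard

lemma sub_eq_mul (hD : IsCheckerboard D N) {i : ℕ} (hi : i < N) {a b y : ℝ}
    (ha : a ∈ Icc ((i : ℝ) / N) (((i : ℝ) + 1) / N))
    (hb : b ∈ Icc ((i : ℝ) / N) (((i : ℝ) + 1) / N)) (hy : y ∈ Icc (0 : ℝ) 1) :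
    D b y - D a y = N * (b - a) * (D (((i : ℝ) + 1) / N) y - D ((i : ℝ) / N) y) := by
  have hN := hD.2.1
  set j := cellIndex N y
  have hyj : y ∈ Icc ((j : ℝ) / N) (((j : ℝ) + 1) / N) :=
    ⟨cellLeft_le hy.1, le_cellRight hN hy.2⟩
  have hlin : ∀ a ∈ Icc ((i : ℝ) / N) (((i : ℝ) + 1) / N),
      ∀ b ∈ Icc ((i : ℝ) / N) (((i : ℝ) + 1) / N), D b y - D a y = N * (b - a) *
        ((D (((i : ℝ) + 1) / N) ((j : ℝ) / N) - D ((i : ℝ) / N) ((j : ℝ) / N))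
            * (1 - (N * y - j))
          + (D (((i : ℝ) + 1) / N) (((j : ℝ) + 1) / N) - D ((i : ℝ) / N) (((j : ℝ) + 1) / N))
            * (N * y - j)) := by
    intro a ha b hb
    have hj := cellIndex_lt hN y
    rw [hD.2.2 i hi j hj b hb y hyj, hD.2.2 i hi j hj a ha y hyj]
    ring
  have hcell := natCast_div_le_add_one_div i N
  rw [hlin a ha b hb, hlin _ (left_mem_Icc.2 hcell) _ (right_mem_Icc.2 hcell)]
  field_simp
  ring

lemma integral_cellSlope_of_mem (hD : IsCheckerboard D N) {i : ℕ} (hi : i < N) {b y : ℝ}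
    (hb : b ∈ Icc ((i : ℝ) / N) (((i : ℝ) + 1) / N)) (hy : y ∈ Icc (0 : ℝ) 1) :
    ∫ t in (i / N : ℝ)..b, cellSlope D N t y = D b y - D (i / N) y := by
  have hconst : EqOn (fun t => cellSlope D N t y)
      (fun _ => N * (D (((i : ℝ) + 1) / N) y - D ((i : ℝ) / N) y)) (Ioo ((i : ℝ) / N) b) :=
    fun t ht => by
      dsimp only
      rw [cellSlope, cellRight, cellLeft, cellIndex_eq hi ht.1.le (ht.2.trans_le hb.2)]
  rw [intervalIntegral.integral_of_le hb.1, integral_Ioc_eq_integral_Ioo,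
    setIntegral_congr_fun measurableSet_Ioo hconst, setIntegral_const,
    Real.volume_real_Ioo_of_le hb.1, smul_eq_mul,
    hD.sub_eq_mul hi (left_mem_Icc.2 (hb.1.trans hb.2)) hb hy]
  ring

lemma integral_cellSlope (hD : IsCheckerboard D N) {a y : ℝ} (ha : a ∈ Icc (0 : ℝ) 1)
    (hy : y ∈ Icc (0 : ℝ) 1) : ∫ t in (0 : ℝ)..a, cellSlope D N t y = D a y := by
  have hN := hD.2.1
  have hint : ∀ u ∈ Icc (0 : ℝ) 1, ∀ v ∈ Icc (0 : ℝ) 1,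
      IntervalIntegrable (fun t => cellSlope D N t y) volume u v := fun u hu v hv =>
    ((integrableOn_Icc_of_mem_Icc (measurable_cellSlope D N y) fun t _ =>
      hD.1.cellSlope_mem_Icc hN t hy).mono_set (uIcc_subset_Icc hu hv)).intervalIntegrable
  have hgrid : ∀ k ≤ N, ∫ t in (0 : ℝ)..(k / N), cellSlope D N t y = D (k / N) y := by
    intro k
    induction k with
    | zero => simp [(hD.1.1 y hy).2.1]
    | succ k ih =>
      intro hk
      rw [← intervalIntegral.integral_add_adjacent_intervals
        (hint _ ⟨le_rfl, zero_le_one⟩ _ (natCast_div_mem_Icc (Nat.le_of_succ_le hk)))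
        (hint _ (natCast_div_mem_Icc (Nat.le_of_succ_le hk)) _ (natCast_div_mem_Icc hk)),
        ih (Nat.le_of_succ_le hk), Nat.cast_add_one,
        hD.integral_cellSlope_of_mem hk (right_mem_Icc.2 (natCast_div_le_add_one_div k N)) hy]
      ring
  have hi := cellIndex_lt hN a
  rw [← intervalIntegral.integral_add_adjacent_intervals (b := (cellIndex N a : ℝ) / N)
    (hint _ ⟨le_rfl, zero_le_one⟩ _ (cellLeft_mem_Icc hN a))
    (hint _ (cellLeft_mem_Icc hN a) _ ha),
    hgrid _ hi.le, hD.integral_cellSlope_of_mem hi ⟨cellLeft_le ha.1, le_cellRight hN ha.2⟩ hy]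
  ring

lemma isMarkovKernelOf_cellSlope (hD : IsCheckerboard D N) :
    IsMarkovKernelOf D (cellSlope D N) where
  meas y _ := measurable_cellSlope D N y
  mono x _ := hD.1.monotoneOn_cellSlope hD.2.1 x
  nonneg x _ _ hy := hD.1.cellSlope_nonneg hD.2.1 x hy
  apply_one x _ := hD.1.cellSlope_one hD.2.1 x
  disint a ha y hy := by
    rw [integral_Icc_eq_integral_Ioc, ← intervalIntegral.integral_of_le ha.1]
    exact hD.integral_cellSlope ha hy

end IsCheckerboard

lemma IsCheckerboardApprox.cellSlope_natCast_div (hD : IsCheckerboardApprox C D N) {j : ℕ}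
    (hj : j ≤ N) (x : ℝ) : cellSlope D N x (j / N) = cellSlope C N x (j / N) := by
  have hi := cellIndex_lt hD.1.2.1 x
  rw [cellSlope, cellSlope, cellLeft, cellRight, ← Nat.cast_add_one, hD.2 _ hi j hj,
    hD.2 _ hi.le j hj]

end CellSlope

theorem ae_tendsto_average_Icc {E : Type*} [NormedAddCommGroup E] [NormedSpace ℝ E]
    [CompleteSpace E] {f : ℝ → E} (hf : LocallyIntegrable f) :
    ∀ᵐ x, ∀ {ι : Type*} {l : Filter ι} (a b : ι → ℝ), (∀ i, x ∈ Icc (a i) (b i)) →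
      (∀ i, a i < b i) → Tendsto (fun i => b i - a i) l (𝓝 0) →
      Tendsto (fun i => ⨍ t in Icc (a i) (b i), f t) l (𝓝 (f x)) := by
  filter_upwards [IsUnifLocDoublingMeasure.ae_tendsto_average volume hf 1]
    with x hx ι l a b hmem hlt hlen
  have hball : ∀ i, Icc (a i) (b i) = Metric.closedBall ((a i + b i) / 2) ((b i - a i) / 2) :=
    fun i => by rw [Real.closedBall_eq_Icc]; congr 1 <;> ring
  simp only [hball]
  refine hx _ _ (tendsto_nhdsWithin_iff.2 ⟨by simpa using hlen.div_const 2,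
    Eventually.of_forall fun i => ?_⟩) (Eventually.of_forall fun i => ?_)
  · simpa using hlt i
  · rw [one_mul, ← hball]
    exact hmem i

namespace IsMarkovKernelOf

variable {C K : ℝ → ℝ → ℝ}

lemma mem_Icc (hK : IsMarkovKernelOf C K) {t y : ℝ} (ht : t ∈ Icc (0 : ℝ) 1)
    (hy : y ∈ Icc (0 : ℝ) 1) : K t y ∈ Icc (0 : ℝ) 1 :=
  ⟨hK.nonneg t ht y hy, hK.apply_one t ht ▸ hK.mono t ht hy ⟨zero_le_one, le_rfl⟩ hy.2⟩

lemma integrableOn (hK : IsMarkovKernelOf C K) {y : ℝ} (hy : y ∈ Icc (0 : ℝ) 1) :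
    IntegrableOn (fun t => K t y) (Icc 0 1) :=
  integrableOn_Icc_of_mem_Icc (hK.meas y hy) fun _ ht => hK.mem_Icc ht hy

lemma integral_eq_sub (hK : IsMarkovKernelOf C K) {a b y : ℝ} (ha : a ∈ Icc (0 : ℝ) 1)
    (hb : b ∈ Icc (0 : ℝ) 1) (hy : y ∈ Icc (0 : ℝ) 1) :
    ∫ t in a..b, K t y = C b y - C a y := by
  have hint : ∀ u ∈ Icc (0 : ℝ) 1, IntervalIntegrable (fun t => K t y) volume 0 u :=
    fun u hu => ((hK.integrableOn hy).mono_set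
      (uIcc_subset_Icc ⟨le_rfl, zero_le_one⟩ hu)).intervalIntegrable
  have hprim : ∀ u ∈ Icc (0 : ℝ) 1, ∫ t in (0 : ℝ)..u, K t y = C u y := fun u hu => by
    rw [intervalIntegral.integral_of_le hu.1, ← integral_Icc_eq_integral_Ioc]
    exact hK.disint u hu y hy
  rw [← intervalIntegral.integral_interval_sub_left (hint b hb) (hint a ha), hprim a ha,
    hprim b hb]

lemma ae_tendsto_cellSlope (hK : IsMarkovKernelOf C K) {N : ℕ → ℕ} (hN₀ : ∀ n, 0 < N n)
    (hN : Tendsto N atTop atTop) {y : ℝ} (hy : y ∈ Icc (0 : ℝ) 1) :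
    ∀ᵐ x ∂volume.restrict (Icc 0 1),
      Tendsto (fun n => cellSlope C (N n) x y) atTop (𝓝 (K x y)) := by
  have hf : Integrable ((Icc (0 : ℝ) 1).indicator fun t => K t y) :=
    (integrable_indicator_iff measurableSet_Icc).2 (hK.integrableOn hy)
  filter_upwards [ae_restrict_of_ae (ae_tendsto_average_Icc hf.locallyIntegrable),
    ae_restrict_mem measurableSet_Icc] with x hx hxI
  have h := hx (fun n => cellLeft (N n) x) (fun n => cellRight (N n) x)
    (fun n => ⟨cellLeft_le hxI.1, le_cellRight (hN₀ n) hxI.2⟩)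
    (fun n => sub_pos.1 (by rw [cellRight_sub_cellLeft]; have := hN₀ n; positivity))
    (by simpa only [cellRight_sub_cellLeft] using tendsto_natCast_inv hN)
  rw [indicator_of_mem hxI] at h
  refine h.congr fun n => ?_
  have hl := cellLeft_mem_Icc (hN₀ n) x
  have hr := cellRight_mem_Icc (hN₀ n) x
  have hlr := cellLeft_le_cellRight (N n) x
  rw [setAverage_eq, setIntegral_indicator measurableSet_Icc,
    inter_eq_left.2 (Icc_subset_Icc hl.1 hr.2), integral_Icc_eq_integral_Ioc,
    ← intervalIntegral.integral_of_le hlr, hK.integral_eq_sub hl hr hy,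
    Real.volume_real_Icc_of_le hlr, cellRight_sub_cellLeft, inv_inv, smul_eq_mul, cellSlope]

lemma ae_eq {K' : ℝ → ℝ → ℝ} (hK : IsMarkovKernelOf C K) (hK' : IsMarkovKernelOf C K')
    {y : ℝ} (hy : y ∈ Icc (0 : ℝ) 1) : ∀ᵐ x ∂volume.restrict (Icc 0 1), K x y = K' x y := by
  have hN : Tendsto (fun n : ℕ => n + 1) atTop atTop := tendsto_add_atTop_nat 1
  filter_upwards [hK.ae_tendsto_cellSlope Nat.succ_pos hN hy,
    hK'.ae_tendsto_cellSlope Nat.succ_pos hN hy] with x h h' using tendsto_nhds_unique h h'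

end IsMarkovKernelOf

theorem tendsto_apply_of_monotoneOn {α β ι : Type*} [TopologicalSpace α] [Preorder α]
    [TopologicalSpace β] [LinearOrder β] [OrderTopology β] {l : Filter ι} {F : ι → α → β}
    {G : α → β} {s S : Set α} {y : α} (hF : ∀ i, MonotoneOn (F i) s) (hy : y ∈ s)
    (hG : ContinuousWithinAt G s y) (hSs : S ⊆ s)
    (hS : ∀ q ∈ S, Tendsto (fun i => F i q) l (𝓝 (G q)))
    (hleft : (𝓝[S ∩ Iic y] y).NeBot) (hright : (𝓝[S ∩ Ici y] y).NeBot) :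
    Tendsto (fun i => F i y) l (𝓝 (G y)) := by
  refine tendsto_order.2 ⟨fun a ha => ?_, fun a ha => ?_⟩
  · have hG' : Tendsto G (𝓝[S ∩ Iic y] y) (𝓝 (G y)) :=
      hG.mono (inter_subset_left.trans hSs)
    obtain ⟨q, hqa, hqS, hqy⟩ :=
      ((hG'.eventually (lt_mem_nhds ha)).and self_mem_nhdsWithin).exists
    exact ((hS q hqS).eventually (lt_mem_nhds hqa)).mono fun i hi =>
      hi.trans_le (hF i (hSs hqS) hy hqy)
  · have hG' : Tendsto G (𝓝[S ∩ Ici y] y) (𝓝 (G y)) :=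
      hG.mono (inter_subset_left.trans hSs)
    obtain ⟨q, hqa, hqS, hqy⟩ :=
      ((hG'.eventually (gt_mem_nhds ha)).and self_mem_nhdsWithin).exists
    exact ((hS q hqS).eventually (gt_mem_nhds hqa)).mono fun i hi =>
      (hF i hy (hSs hqS) hqy).trans_lt hi

section Dyadic

def dyadicUnit : Set ℝ := {q | ∃ n k : ℕ, k ≤ 2 ^ n ∧ q = k / (2 ^ n : ℕ)}

lemma countable_dyadicUnit : dyadicUnit.Countable := by
  refine (countable_range fun p : ℕ × ℕ => (p.2 : ℝ) / (2 ^ p.1 : ℕ)).mono ?_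
  rintro _ ⟨n, k, -, rfl⟩
  exact ⟨(n, k), rfl⟩

lemma dyadicUnit_subset_Icc : dyadicUnit ⊆ Icc 0 1 := by
  rintro _ ⟨n, k, hk, rfl⟩
  exact natCast_div_mem_Icc hk

lemma tendsto_two_pow : Tendsto (fun n : ℕ => 2 ^ n) atTop atTop :=
  tendsto_pow_atTop_atTop_of_one_lt one_lt_two

lemma neBot_nhdsWithin_dyadicUnit_Iic {y : ℝ} (hy : y ∈ Icc (0 : ℝ) 1) :
    (𝓝[dyadicUnit ∩ Iic y] y).NeBot := by
  refine mem_closure_iff_nhdsWithin_neBot.1 (mem_closure_of_tendsto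
    (tendsto_cellLeft Nat.two_pow_pos tendsto_two_pow hy) (Eventually.of_forall fun n => ?_))
  exact ⟨⟨n, _, (cellIndex_lt (Nat.two_pow_pos n) y).le, rfl⟩, cellLeft_le hy.1⟩

lemma neBot_nhdsWithin_dyadicUnit_Ici {y : ℝ} (hy : y ∈ Icc (0 : ℝ) 1) :
    (𝓝[dyadicUnit ∩ Ici y] y).NeBot := by
  refine mem_closure_iff_nhdsWithin_neBot.1 (mem_closure_of_tendsto
    (tendsto_cellRight Nat.two_pow_pos tendsto_two_pow hy) (Eventually.of_forall fun n => ?_))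
  exact ⟨⟨n, _, cellIndex_lt (Nat.two_pow_pos n) y, by rw [cellRight, Nat.cast_add_one]⟩,
    le_cellRight (Nat.two_pow_pos n) hy.2⟩

lemma exists_natCast_div_two_pow_eq {m n k : ℕ} (hmn : m ≤ n) (hk : k ≤ 2 ^ m) :
    ∃ j : ℕ, j ≤ 2 ^ n ∧ (k : ℝ) / (2 ^ m : ℕ) = (j : ℝ) / (2 ^ n : ℕ) := by
  have hpow : 2 ^ n = 2 ^ m * 2 ^ (n - m) := by rw [← pow_add, Nat.add_sub_cancel' hmn]
  refine ⟨k * 2 ^ (n - m), by rw [hpow]; exact Nat.mul_le_mul_right _ hk, ?_⟩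
  rw [hpow]
  push_cast
  field_simp

end Dyadic

section Convergence

variable {C K : ℝ → ℝ → ℝ} {D KD : ℕ → ℝ → ℝ → ℝ}

lemma ae_tendsto_of_isCheckerboardApprox (hK : IsMarkovKernelOf C K)
    (hD : ∀ n, IsCheckerboardApprox C (D n) (2 ^ n))
    (hKD : ∀ n, IsMarkovKernelOf (D n) (KD n)) :
    ∀ᵐ x ∂volume.restrict (Icc 0 1), ∀ q ∈ dyadicUnit,
      Tendsto (fun n => KD n x q) atTop (𝓝 (K x q)) := by
  rw [ae_ball_iff countable_dyadicUnit]
  rintro _ ⟨m, k, hk, rfl⟩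
  have hq := natCast_div_mem_Icc hk
  have hKD' : ∀ᵐ x ∂volume.restrict (Icc 0 1), ∀ n,
      KD n x (k / (2 ^ m : ℕ)) = cellSlope (D n) (2 ^ n) x (k / (2 ^ m : ℕ)) :=
    ae_all_iff.2 fun n => (hKD n).ae_eq (hD n).1.isMarkovKernelOf_cellSlope hq
  filter_upwards [hK.ae_tendsto_cellSlope Nat.two_pow_pos tendsto_two_pow hq, hKD']
    with x hCx hKDx
  refine hCx.congr' ((eventually_ge_atTop m).mono fun n hn => ?_)
  dsimp only
  obtain ⟨j, hj, hjk⟩ := exists_natCast_div_two_pow_eq hn hk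
  rw [hKDx, hjk, (hD n).cellSlope_natCast_div hj]

theorem weakCondConv_of_isCheckerboardApprox (hK : IsMarkovKernelOf C K)
    (hD : ∀ n, IsCheckerboardApprox C (D n) (2 ^ n))
    (hKD : ∀ n, IsMarkovKernelOf (D n) (KD n)) :
    WeakCondConv KD K := by
  filter_upwards [ae_tendsto_of_isCheckerboardApprox hK hD hKD,
    ae_restrict_mem measurableSet_Icc] with x hx hxI y hy hcont
  exact tendsto_apply_of_monotoneOn (fun n => (hKD n).mono x hxI) hy hcont
    dyadicUnit_subset_Icc hx (neBot_nhdsWithin_dyadicUnit_Iic hy)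
    (neBot_nhdsWithin_dyadicUnit_Ici hy)

end Convergence

/-- For every bivariate copula `C` (with Markov kernel `K`), the sequence
of dyadic checkerboard approximations `CB_{2^n}(C)` (with any choice of Markov kernels)
converges weakly conditional to `C`. Consequently, the class of checkerboard copulas is
dense in the class of bivariate copulas with respect to weak conditional convergence. -/
theorem stmt0 (C K : ℝ → ℝ → ℝ) (hC : IsCopula C) (hK : IsMarkovKernelOf C K) :
    (∀ (D : ℕ → ℝ → ℝ → ℝ) (KD : ℕ → ℝ → ℝ → ℝ),
      (∀ n, IsCheckerboardApprox C (D n) (2 ^ n)) →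
      (∀ n, IsMarkovKernelOf (D n) (KD n)) →
      WeakCondConv KD K) ∧
    ∃ (D : ℕ → ℝ → ℝ → ℝ) (KD : ℕ → ℝ → ℝ → ℝ),
      (∀ n, ∃ N, IsCheckerboard (D n) N) ∧
      (∀ n, IsMarkovKernelOf (D n) (KD n)) ∧
      WeakCondConv KD K := by
  have hCB : ∀ n, IsCheckerboardApprox C (checkerboard C (2 ^ n)) (2 ^ n) := fun n =>
    hC.isCheckerboardApprox_checkerboard (Nat.two_pow_pos n)
  have hker : ∀ n, IsMarkovKernelOf (checkerboard C (2 ^ n))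
      (cellSlope (checkerboard C (2 ^ n)) (2 ^ n)) := fun n =>
    (hCB n).1.isMarkovKernelOf_cellSlope
  exact ⟨fun _ _ hD hKD => weakCondConv_of_isCheckerboardApprox hK hD hKD,
    _, _, fun n => ⟨2 ^ n, (hCB n).1⟩, hker, weakCondConv_of_isCheckerboardApprox hK hCB hker⟩
end
end

section
/- Let C, C₁, C₂, … be Archimedean copulas with (normalized, right-continuous at 0) generators φ, φ₁, φ₂, …, respectively. Then C_n(x,y) → C(x,y) for all x,y ∈ [0,1] if, and only if, φ_n(x) → φ(x) for all x ∈ (0,1]. -/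
open MeasureTheory Filter Set
open scoped ENNReal

noncomputable section

/-- Right-hand derivative (of a convex function on `[0,1]`) of `f` at `x`, realized as the
infimum of the forward difference quotients with right endpoint in `(x, 1]`. -/
noncomputable def rightD (f : ℝ → ℝ) (x : ℝ) : ℝ :=
  sInf ((fun y => (f y - f x) / (y - x)) '' Set.Ioc x 1)

/-- `φ : [0,1] → [0,∞]` is a (normalized, right-continuous at `0`) generator of an
Archimedean copula: convex, strictly decreasing, `φ 1 = 0`, finite on `(0,1]`,
right-continuous at `0` and normalized by `φ (1/2) = 1`. -/
structure IsGenerator (φ : ℝ → ℝ≥0∞) : Prop where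
  convex : ∀ x ∈ Set.Icc (0:ℝ) 1, ∀ y ∈ Set.Icc (0:ℝ) 1, ∀ t ∈ Set.Icc (0:ℝ) 1,
    φ (t * x + (1 - t) * y) ≤ ENNReal.ofReal t * φ x + ENNReal.ofReal (1 - t) * φ y
  strict_anti : ∀ x ∈ Set.Icc (0:ℝ) 1, ∀ y ∈ Set.Icc (0:ℝ) 1, x < y → φ y < φ x
  map_one : φ 1 = 0
  finite : ∀ x ∈ Set.Ioc (0:ℝ) 1, φ x < ⊤
  rightCont_zero : Filter.Tendsto φ (nhdsWithin 0 (Set.Ioi 0)) (nhds (φ 0))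
  normalized : φ (1/2) = 1

/-- Pseudo-inverse `φ⁻` of a generator: `φ⁻ s = φ⁻¹ s` for `s < φ 0` and `0` for `s ≥ φ 0`. -/
noncomputable def pseudoInv (φ : ℝ → ℝ≥0∞) (s : ℝ≥0∞) : ℝ :=
  sSup {x | x ∈ Set.Icc (0:ℝ) 1 ∧ s ≤ φ x}

/-- The Archimedean copula generated by `φ`: `C(x,y) = φ⁻(φ x + φ y)`. -/
noncomputable def archCopula (φ : ℝ → ℝ≥0∞) (x y : ℝ) : ℝ :=
  pseudoInv φ (φ x + φ y)

/-- The right-hand derivative `D⁺φ` of a generator. -/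
noncomputable def Dplus (φ : ℝ → ℝ≥0∞) (x : ℝ) : ℝ :=
  rightD (fun t => (φ t).toReal) x

/-- The set `Cont(D⁺φ)` of continuity points of `D⁺φ` in `(0,1)`. -/
def ContD (φ : ℝ → ℝ≥0∞) : Set ℝ :=
  {x | x ∈ Set.Ioo (0:ℝ) 1 ∧ ContinuousAt (Dplus φ) x}

/-- The `t`-level function `f^t(x) = φ⁻(φ t − φ x)` of the Archimedean copula generated
by `φ`. -/
noncomputable def levelFn (φ : ℝ → ℝ≥0∞) (t x : ℝ) : ℝ :=
  pseudoInv φ (φ t - φ x)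

/-- The Kendall distribution function `F^Kendall(x) = x − φ(x)/D⁺φ(x)` of the Archimedean
copula generated by `φ`. -/
noncomputable def kendall (φ : ℝ → ℝ≥0∞) (x : ℝ) : ℝ :=
  x - (φ x).toReal / Dplus φ x

/-- The Markov kernel (as conditional distribution function `(x,y) ↦ K_C(x,[0,y])`) of the
Archimedean copula generated by `φ`. -/
noncomputable def archKernel (φ : ℝ → ℝ≥0∞) (x y : ℝ) : ℝ :=
  if x = 0 ∨ x = 1 then 1
  else if y < levelFn φ 0 x then 0
  else Dplus φ x / Dplus φ (archCopula φ x y)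

/-- The metric `D₁` between two copulas, expressed via their conditional distribution
functions `K₁, K₂` (with `Kᵢ x y = K_{Cᵢ}(x,[0,y])`). -/
noncomputable def D1 (K1 K2 : ℝ → ℝ → ℝ) : ℝ :=
  ∫ y in Set.Icc (0:ℝ) 1, ∫ x in Set.Icc (0:ℝ) 1, |K1 x y - K2 x y|

/-- Conditional distribution function of the independence copula `Π`. -/
def piKernel : ℝ → ℝ → ℝ := fun _ y => y

/-- Dependence measure `ζ₁(C) = 3 D₁(C, Π)`. -/
noncomputable def zeta1 (K : ℝ → ℝ → ℝ) : ℝ := 3 * D1 K piKernel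

/-- Dependence measure `r(C) = 6 ∫∫ K_C(x,[0,y])² dλ(x) dλ(y) − 2`. -/
noncomputable def rdep (K : ℝ → ℝ → ℝ) : ℝ :=
  6 * (∫ y in Set.Icc (0:ℝ) 1, ∫ x in Set.Icc (0:ℝ) 1, (K x y) ^ 2) - 2

/-! The pseudo-inverse turns the copula into addition, `C(φ⁻ s, φ⁻ t) = φ⁻ (s + t)`, and the
normalization gives `φ⁻ 1 = 1/2` for every generator. If `C_n → C` pointwise, the convergence
persists along convergent arguments because the `C_n` are monotone and `C` is continuous, so the
set of `s` with `φ_n⁻ s → φ⁻ s` contains `0` and `1` and is closed under addition; it is closed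
under halving because the diagonal of `C` is strictly increasing where it is positive. Hence
`φ_n⁻ → φ⁻` on the dense set of dyadic numbers, and monotonicity gives `φ_n → φ` on `(0,1]`.
Conversely, pointwise convergence of strictly decreasing functions makes their pseudo-inverses
converge along convergent arguments. -/

open Topology

lemma ENNReal.exists_nat_mul_inv_two_pow_btwn {a b : ℝ≥0∞} (hab : a < b) :
    ∃ k m : ℕ, a < k * 2⁻¹ ^ m ∧ (k : ℝ≥0∞) * 2⁻¹ ^ m < b := by
  classical
  obtain ⟨m, hm⟩ := ENNReal.exists_inv_two_pow_lt (tsub_pos_of_lt hab).ne'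
  have hex : ∃ k : ℕ, a < k * 2⁻¹ ^ m :=
    ENNReal.exists_nat_mul_gt (pow_ne_zero _ (ENNReal.inv_ne_zero.2 ENNReal.ofNat_ne_top))
      hab.ne_top
  refine ⟨Nat.find hex, m, Nat.find_spec hex, ?_⟩
  have hk0 : Nat.find hex ≠ 0 := fun h0 => by
    have h := Nat.find_spec hex
    rw [h0] at h
    simp at h
  obtain ⟨j, hj⟩ := Nat.exists_eq_add_one_of_ne_zero hk0
  have hja : (j : ℝ≥0∞) * 2⁻¹ ^ m ≤ a := not_lt.1 (Nat.find_min hex (by omega))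
  calc ((Nat.find hex : ℕ) : ℝ≥0∞) * 2⁻¹ ^ m = j * 2⁻¹ ^ m + 2⁻¹ ^ m := by
        rw [hj, Nat.cast_succ, add_one_mul]
    _ < a + (b - a) := ENNReal.add_lt_add_of_le_of_lt (by finiteness) hja hm
    _ = b := add_tsub_cancel_of_le hab.le

namespace IsGenerator

variable {φ : ℝ → ℝ≥0∞}

lemma strictAntiOn (hφ : IsGenerator φ) : StrictAntiOn φ (Icc 0 1) :=
  fun _ hx _ hy h => hφ.strict_anti _ hx _ hy h

lemma one_lt_map_zero (hφ : IsGenerator φ) : 1 < φ 0 :=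
  hφ.normalized ▸ hφ.strictAntiOn ⟨le_rfl, zero_le_one⟩ ⟨by norm_num, by norm_num⟩
    (by norm_num : (0:ℝ) < 1 / 2)

lemma convexOn_toReal (hφ : IsGenerator φ) : ConvexOn ℝ (Ioc 0 1) fun x => (φ x).toReal := by
  refine ⟨convex_Ioc 0 1, fun x hx y hy a b ha hb hab => ?_⟩
  obtain rfl : b = 1 - a := by linarith
  have hφx := (hφ.finite x hx).ne
  have hφy := (hφ.finite y hy).ne
  have h := ENNReal.toReal_mono (by finiteness)
    (hφ.convex x (Ioc_subset_Icc_self hx) y (Ioc_subset_Icc_self hy) a ⟨ha, by linarith⟩)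
  rw [ENNReal.toReal_add (by finiteness) (by finiteness), ENNReal.toReal_mul, ENNReal.toReal_mul,
    ENNReal.toReal_ofReal ha, ENNReal.toReal_ofReal hb] at h
  simpa only [smul_eq_mul] using h

lemma continuousWithinAt_one (hφ : IsGenerator φ) : ContinuousWithinAt φ (Icc 0 1) 1 := by
  -- convexity between `1/2` and `1` gives `φ z ≤ 2 (1 - z)` near `1`
  have hbound : ∀ z ∈ Icc (1 / 2 : ℝ) 1, φ z ≤ ENNReal.ofReal (2 * (1 - z)) := by
    intro z hz
    have h := hφ.convex (1 / 2) ⟨by norm_num, by norm_num⟩ 1 ⟨zero_le_one, le_rfl⟩ (2 * (1 - z))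
      ⟨by linarith [hz.2], by linarith [hz.1]⟩
    rw [hφ.normalized, hφ.map_one, mul_zero, add_zero] at h
    simp only [mul_one] at h
    rwa [show 2 * (1 - z) * (1 / 2) + (1 - 2 * (1 - z)) = z by ring] at h
  have hlim : Tendsto (fun z : ℝ => ENNReal.ofReal (2 * (1 - z))) (𝓝[Icc 0 1] 1) (𝓝 0) := by
    have hcont : Continuous fun z : ℝ => ENNReal.ofReal (2 * (1 - z)) :=
      ENNReal.continuous_ofReal.comp (by fun_prop)
    simpa using (hcont.tendsto 1).mono_left nhdsWithin_le_nhds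
  rw [ContinuousWithinAt, hφ.map_one]
  refine tendsto_of_tendsto_of_tendsto_of_le_of_le' tendsto_const_nhds hlim
    (Eventually.of_forall fun _ => zero_le) ?_
  filter_upwards [inter_mem_nhdsWithin (Icc 0 1) (Ioi_mem_nhds (by norm_num : (1 / 2 : ℝ) < 1))]
    with z hz
  exact hbound z ⟨hz.2.le, hz.1.2⟩

lemma continuousOn (hφ : IsGenerator φ) : ContinuousOn φ (Icc 0 1) := by
  intro x hx
  rcases hx.1.eq_or_lt with rfl | hx0
  · exact (continuousWithinAt_Ioi_iff_Ici.1 hφ.rightCont_zero).mono Icc_subset_Ici_self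
  rcases hx.2.eq_or_lt with rfl | hx1
  · exact hφ.continuousWithinAt_one
  have hIoo : interior (Ioc (0:ℝ) 1) ∈ 𝓝 x := by
    rw [interior_Ioc]
    exact Ioo_mem_nhds hx0 hx1
  have hreal : ContinuousAt (fun z => (φ z).toReal) x :=
    (hφ.convexOn_toReal.continuousOn_interior x (mem_of_mem_nhds hIoo)).continuousAt hIoo
  have heq : (fun z => ENNReal.ofReal (φ z).toReal) =ᶠ[𝓝 x] φ := by
    filter_upwards [hIoo] with z hz
    exact ENNReal.ofReal_toReal (hφ.finite z (interior_subset hz)).ne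
  exact ((ENNReal.continuous_ofReal.continuousAt.comp hreal).congr heq).continuousWithinAt

end IsGenerator

section PseudoInv

variable {φ : ℝ → ℝ≥0∞} {s : ℝ≥0∞} {x c : ℝ}

lemma pseudoInv_nonneg (φ : ℝ → ℝ≥0∞) (s : ℝ≥0∞) : 0 ≤ pseudoInv φ s :=
  Real.sSup_nonneg fun _ hx => hx.1.1

lemma pseudoInv_le_one : pseudoInv φ s ≤ 1 :=
  Real.sSup_le (fun _ hx => hx.1.2) zero_le_one

lemma pseudoInv_mem_Icc : pseudoInv φ s ∈ Icc 0 1 :=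
  ⟨pseudoInv_nonneg φ s, pseudoInv_le_one⟩

lemma le_pseudoInv (hx : x ∈ Icc 0 1) (h : s ≤ φ x) : x ≤ pseudoInv φ s :=
  le_csSup (bddAbove_Icc.mono fun _ hy => hy.1) ⟨hx, h⟩

lemma pseudoInv_zero : pseudoInv φ 0 = 1 :=
  le_antisymm pseudoInv_le_one (le_pseudoInv ⟨zero_le_one, le_rfl⟩ (zero_le))

lemma pseudoInv_antitone (φ : ℝ → ℝ≥0∞) : Antitone (pseudoInv φ) := fun _ _ h =>
  Real.sSup_le (fun _ hx => le_pseudoInv hx.1 (h.trans hx.2)) (pseudoInv_nonneg _ _)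

lemma exists_map_lt_of_pseudoInv_lt (h : pseudoInv φ s < c) (hc : c ≤ 1) :
    ∃ u ∈ Ioc 0 1, u < c ∧ φ u < s := by
  obtain ⟨u, hsu, huc⟩ := exists_between h
  have hu : u ∈ Ioc 0 1 := ⟨(pseudoInv_nonneg φ s).trans_lt hsu, huc.le.trans hc⟩
  exact ⟨u, hu, huc, not_le.1 fun hs => hsu.not_ge (le_pseudoInv (Ioc_subset_Icc_self hu) hs)⟩

lemma pseudoInv_le (hφ : StrictAntiOn φ (Icc 0 1)) (hx : x ∈ Icc 0 1) (h : φ x ≤ s) :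
    pseudoInv φ s ≤ x :=
  Real.sSup_le (fun _ hy => not_lt.1 fun hxy => (hφ hx hy.1 hxy).not_ge (h.trans hy.2)) hx.1

lemma pseudoInv_map (hφ : StrictAntiOn φ (Icc 0 1)) (hx : x ∈ Icc 0 1) :
    pseudoInv φ (φ x) = x :=
  le_antisymm (pseudoInv_le hφ hx le_rfl) (le_pseudoInv hx le_rfl)

lemma pseudoInv_eq_zero (hφ : StrictAntiOn φ (Icc 0 1)) (h : φ 0 ≤ s) : pseudoInv φ s = 0 :=
  le_antisymm (pseudoInv_le hφ ⟨le_rfl, zero_le_one⟩ h) (pseudoInv_nonneg φ s)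

lemma exists_lt_map_of_lt_pseudoInv (hφ : StrictAntiOn φ (Icc 0 1)) (hc : 0 ≤ c)
    (h : c < pseudoInv φ s) : ∃ u ∈ Ioc 0 1, c < u ∧ s < φ u := by
  rcases eq_empty_or_nonempty {x | x ∈ Icc (0:ℝ) 1 ∧ s ≤ φ x} with hemp | hne
  · rw [pseudoInv, hemp, Real.sSup_empty] at h
    exact absurd h hc.not_gt
  obtain ⟨v, hv, hcv⟩ := exists_lt_of_lt_csSup hne h
  obtain ⟨u, hcu, huv⟩ := exists_between hcv
  have hu : u ∈ Ioc 0 1 := ⟨hc.trans_lt hcu, huv.le.trans hv.1.2⟩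
  exact ⟨u, hu, hcu, hv.2.trans_lt (hφ (Ioc_subset_Icc_self hu) hv.1 huv)⟩

lemma tendsto_pseudoInv {ι : Type*} {l : Filter ι} {ψ : ι → ℝ → ℝ≥0∞} {σ : ι → ℝ≥0∞}
    (hφ : StrictAntiOn φ (Icc 0 1)) (hψ : ∀ i, StrictAntiOn (ψ i) (Icc 0 1))
    (hψφ : ∀ x ∈ Ioc (0:ℝ) 1, Tendsto (fun i => ψ i x) l (𝓝 (φ x)))
    (hσ : Tendsto σ l (𝓝 s)) :
    Tendsto (fun i => pseudoInv (ψ i) (σ i)) l (𝓝 (pseudoInv φ s)) := by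
  refine tendsto_order.2 ⟨fun c hc => ?_, fun c hc => ?_⟩
  · rcases lt_or_ge c 0 with hc0 | hc0
    · exact Eventually.of_forall fun i => hc0.trans_le (pseudoInv_nonneg _ _)
    obtain ⟨u, hu, hcu, hsu⟩ := exists_lt_map_of_lt_pseudoInv hφ hc0 hc
    obtain ⟨m, hsm, hmu⟩ := exists_between hsu
    filter_upwards [(tendsto_order.1 hσ).2 m hsm, (tendsto_order.1 (hψφ u hu)).1 m hmu]
      with i hσi hψi
    exact hcu.trans_le (le_pseudoInv (Ioc_subset_Icc_self hu) (hσi.trans hψi).le)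
  · rcases lt_or_ge 1 c with hc1 | hc1
    · exact Eventually.of_forall fun i => pseudoInv_le_one.trans_lt hc1
    obtain ⟨u, hu, huc, hus⟩ := exists_map_lt_of_pseudoInv_lt hc hc1
    obtain ⟨m, hum, hms⟩ := exists_between hus
    filter_upwards [(tendsto_order.1 hσ).1 m hms, (tendsto_order.1 (hψφ u hu)).2 m hum]
      with i hσi hψi
    exact (pseudoInv_le (hψ i) (Ioc_subset_Icc_self hu) (hψi.trans hσi).le).trans_lt huc

lemma continuous_pseudoInv (hφ : StrictAntiOn φ (Icc 0 1)) : Continuous (pseudoInv φ) :=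
  continuous_iff_continuousAt.2 fun _ =>
    tendsto_pseudoInv (ψ := fun _ => φ) hφ (fun _ => hφ) (fun _ _ => tendsto_const_nhds)
      tendsto_id

end PseudoInv

namespace IsGenerator

variable {φ : ℝ → ℝ≥0∞} {s : ℝ≥0∞} {x : ℝ}

lemma map_pseudoInv (hφ : IsGenerator φ) (hs : s ≤ φ 0) : φ (pseudoInv φ s) = s := by
  obtain ⟨x, hx, rfl⟩ :=
    intermediate_value_Icc' zero_le_one hφ.continuousOn ⟨by rw [hφ.map_one]; exact zero_le, hs⟩
  rw [pseudoInv_map hφ.strictAntiOn hx]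

lemma pseudoInv_one (hφ : IsGenerator φ) : pseudoInv φ 1 = 1 / 2 := by
  rw [← hφ.normalized, pseudoInv_map hφ.strictAntiOn ⟨by norm_num, by norm_num⟩]

lemma lt_pseudoInv (hφ : IsGenerator φ) (hx : x ∈ Icc 0 1) (h : s < φ x) :
    x < pseudoInv φ s := by
  have hs : s ≤ φ 0 := h.le.trans (hφ.strictAntiOn.antitoneOn ⟨le_rfl, zero_le_one⟩ hx hx.1)
  refine not_le.1 fun hle => h.not_ge ?_
  simpa only [hφ.map_pseudoInv hs] using hφ.strictAntiOn.antitoneOn pseudoInv_mem_Icc hx hle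

lemma pseudoInv_lt (hφ : IsGenerator φ) (hx : x ∈ Ioc 0 1) (h : φ x < s) :
    pseudoInv φ s < x := by
  rcases le_or_gt s (φ 0) with hs | hs
  · refine not_le.1 fun hle => h.not_ge ?_
    simpa only [hφ.map_pseudoInv hs] using
      hφ.strictAntiOn.antitoneOn (Ioc_subset_Icc_self hx) pseudoInv_mem_Icc hle
  · rw [pseudoInv_eq_zero hφ.strictAntiOn hs.le]
    exact hx.1

end IsGenerator

section ArchCopula

variable {φ : ℝ → ℝ≥0∞} {x y : ℝ}

lemma archCopula_eq_zero (hφ : StrictAntiOn φ (Icc 0 1)) (h : x = 0 ∨ y = 0) :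
    archCopula φ x y = 0 := by
  rcases h with rfl | rfl
  · exact pseudoInv_eq_zero hφ le_self_add
  · exact pseudoInv_eq_zero hφ le_add_self

lemma archCopula_pseudoInv (hφ : IsGenerator φ) (s t : ℝ≥0∞) :
    archCopula φ (pseudoInv φ s) (pseudoInv φ t) = pseudoInv φ (s + t) := by
  have hφ' := hφ.strictAntiOn
  rcases le_or_gt s (φ 0) with hs | hs
  · rcases le_or_gt t (φ 0) with ht | ht
    · rw [archCopula, hφ.map_pseudoInv hs, hφ.map_pseudoInv ht]
    · rw [pseudoInv_eq_zero hφ' ht.le, archCopula_eq_zero hφ' (Or.inr rfl),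
        pseudoInv_eq_zero hφ' (ht.le.trans le_add_self)]
  · rw [pseudoInv_eq_zero hφ' hs.le, archCopula_eq_zero hφ' (Or.inl rfl),
      pseudoInv_eq_zero hφ' (hs.le.trans le_self_add)]

lemma monotoneOn_archCopula (hφ : AntitoneOn φ (Icc 0 1)) :
    MonotoneOn (fun p : ℝ × ℝ => archCopula φ p.1 p.2) (Icc 0 1 ×ˢ Icc 0 1) :=
  fun _ hp _ hq hpq =>
    pseudoInv_antitone φ (add_le_add (hφ hp.1 hq.1 hpq.1) (hφ hp.2 hq.2 hpq.2))

lemma continuousOn_archCopula (hφ : IsGenerator φ) :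
    ContinuousOn (fun p : ℝ × ℝ => archCopula φ p.1 p.2) (Icc 0 1 ×ˢ Icc 0 1) :=
  (continuous_pseudoInv hφ.strictAntiOn).comp_continuousOn
    ((hφ.continuousOn.comp continuousOn_fst fun _ hp => hp.1).add
      (hφ.continuousOn.comp continuousOn_snd fun _ hp => hp.2))

end ArchCopula

lemma tendsto_apply_of_monotoneOn_unitSquare {ι : Type*} {l : Filter ι}
    {F : ι → ℝ × ℝ → ℝ} {G : ℝ × ℝ → ℝ} {p : ℝ × ℝ} {q : ι → ℝ × ℝ}
    (hF : ∀ i, MonotoneOn (F i) (Icc 0 1 ×ˢ Icc 0 1))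
    (hFG : ∀ z ∈ Icc (0:ℝ) 1 ×ˢ Icc (0:ℝ) 1, Tendsto (fun i => F i z) l (𝓝 (G z)))
    (hp : p ∈ Icc (0:ℝ) 1 ×ˢ Icc (0:ℝ) 1) (hG : ContinuousWithinAt G (Icc 0 1 ×ˢ Icc 0 1) p)
    (hq : Tendsto q l (𝓝 p)) (hqB : ∀ i, q i ∈ Icc (0:ℝ) 1 ×ˢ Icc (0:ℝ) 1) :
    Tendsto (fun i => F i (q i)) l (𝓝 (G p)) := by
  rw [Metric.tendsto_nhds]
  intro ε hε
  obtain ⟨δ, hδ, hGδ⟩ := Metric.continuousWithinAt_iff.1 hG (ε / 2) (half_pos hε)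
  obtain ⟨⟨hp₁, hp₁'⟩, hp₂, hp₂'⟩ := hp
  -- `F i (q i)` is squeezed between the values of `F i` at two corners close to `p`
  set lo : ℝ × ℝ := (max (p.1 - δ / 2) 0, max (p.2 - δ / 2) 0)
  set hi : ℝ × ℝ := (min (p.1 + δ / 2) 1, min (p.2 + δ / 2) 1)
  have hlo : lo ∈ Icc (0:ℝ) 1 ×ˢ Icc (0:ℝ) 1 :=
    ⟨⟨le_max_right _ _, max_le (by linarith) zero_le_one⟩,
      le_max_right _ _, max_le (by linarith) zero_le_one⟩
  have hhi : hi ∈ Icc (0:ℝ) 1 ×ˢ Icc (0:ℝ) 1 :=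
    ⟨⟨le_min (by linarith) zero_le_one, min_le_right _ _⟩,
      le_min (by linarith) zero_le_one, min_le_right _ _⟩
  have hGlo := hGδ hlo (by
    rw [Prod.dist_eq, max_lt_iff, Real.dist_eq, Real.dist_eq, abs_lt, abs_lt]
    refine ⟨⟨?_, ?_⟩, ?_, ?_⟩ <;>
      linarith [le_max_left (p.1 - δ / 2) 0, le_max_left (p.2 - δ / 2) 0,
        max_le (by linarith : p.1 - δ / 2 ≤ p.1) hp₁, max_le (by linarith : p.2 - δ / 2 ≤ p.2) hp₂])
  have hGhi := hGδ hhi (by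
    rw [Prod.dist_eq, max_lt_iff, Real.dist_eq, Real.dist_eq, abs_lt, abs_lt]
    refine ⟨⟨?_, ?_⟩, ?_, ?_⟩ <;>
      linarith [min_le_left (p.1 + δ / 2) 1, min_le_left (p.2 + δ / 2) 1,
        le_min (by linarith : p.1 ≤ p.1 + δ / 2) hp₁', le_min (by linarith : p.2 ≤ p.2 + δ / 2) hp₂'])
  filter_upwards [Metric.tendsto_nhds.1 hq (δ / 2) (half_pos hδ),
    Metric.tendsto_nhds.1 (hFG lo hlo) (ε / 2) (half_pos hε),
    Metric.tendsto_nhds.1 (hFG hi hhi) (ε / 2) (half_pos hε)] with i hqi hlo_i hhi_i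
  obtain ⟨⟨hq₁, hq₁'⟩, hq₂, hq₂'⟩ := hqB i
  rw [Prod.dist_eq, max_lt_iff, Real.dist_eq, Real.dist_eq, abs_lt, abs_lt] at hqi
  have hFlo := hF i hlo (hqB i)
    ⟨max_le (by linarith) hq₁, max_le (by linarith) hq₂⟩
  have hFhi := hF i (hqB i) hhi
    ⟨le_min (by linarith) hq₁', le_min (by linarith) hq₂'⟩
  rw [Real.dist_eq, abs_lt] at hGlo hGhi hlo_i hhi_i ⊢
  constructor <;> linarith [hlo_i.1, hhi_i.2, hGlo.1, hGhi.2]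

section ConvergenceOfGenerators

variable {ι : Type*} {l : Filter ι} {φ : ℝ → ℝ≥0∞} {φs : ι → ℝ → ℝ≥0∞}

lemma tendsto_pseudoInv_add (hφ : IsGenerator φ) (hφs : ∀ i, IsGenerator (φs i))
    (hC : ∀ x ∈ Icc (0:ℝ) 1, ∀ y ∈ Icc (0:ℝ) 1,
      Tendsto (fun i => archCopula (φs i) x y) l (𝓝 (archCopula φ x y)))
    {s t : ℝ≥0∞} (hs : Tendsto (fun i => pseudoInv (φs i) s) l (𝓝 (pseudoInv φ s)))
    (ht : Tendsto (fun i => pseudoInv (φs i) t) l (𝓝 (pseudoInv φ t))) :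
    Tendsto (fun i => pseudoInv (φs i) (s + t)) l (𝓝 (pseudoInv φ (s + t))) := by
  have h := tendsto_apply_of_monotoneOn_unitSquare
    (fun i => monotoneOn_archCopula (hφs i).strictAntiOn.antitoneOn)
    (fun z hz => hC z.1 hz.1 z.2 hz.2) ⟨pseudoInv_mem_Icc, pseudoInv_mem_Icc⟩
    (continuousOn_archCopula hφ _ ⟨pseudoInv_mem_Icc, pseudoInv_mem_Icc⟩) (hs.prodMk_nhds ht)
    (fun _ => ⟨pseudoInv_mem_Icc, pseudoInv_mem_Icc⟩)
  rw [archCopula_pseudoInv hφ] at h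
  exact h.congr fun i => archCopula_pseudoInv (hφs i) s t

lemma tendsto_pseudoInv_div_two (hφ : IsGenerator φ) (hφs : ∀ i, IsGenerator (φs i))
    (hC : ∀ x ∈ Icc (0:ℝ) 1, ∀ y ∈ Icc (0:ℝ) 1,
      Tendsto (fun i => archCopula (φs i) x y) l (𝓝 (archCopula φ x y)))
    {s : ℝ≥0∞} (hs0 : s < φ 0) (hs : Tendsto (fun i => pseudoInv (φs i) s) l (𝓝 (pseudoInv φ s))) :
    Tendsto (fun i => pseudoInv (φs i) (s / 2)) l (𝓝 (pseudoInv φ (s / 2))) := by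
  have hv : φ (pseudoInv φ (s / 2)) = s / 2 :=
    hφ.map_pseudoInv (ENNReal.half_le_self.trans hs0.le)
  have hw : φ (pseudoInv φ s) = s := hφ.map_pseudoInv hs0.le
  have hw0 : 0 < pseudoInv φ s := hφ.lt_pseudoInv ⟨le_rfl, zero_le_one⟩ hs0
  -- compare `pseudoInv (φs i) (s / 2)` with `c` through the diagonal values `C(c, c)`
  refine tendsto_order.2 ⟨fun c hcv => ?_, fun c hvc => ?_⟩
  · rcases lt_or_ge c 0 with hc0 | hc0
    · exact Eventually.of_forall fun i => hc0.trans_le (pseudoInv_nonneg _ _)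
    have hc : c ∈ Icc (0:ℝ) 1 := ⟨hc0, hcv.le.trans pseudoInv_le_one⟩
    have hφc := hφ.strictAntiOn hc pseudoInv_mem_Icc hcv
    have hlt : archCopula φ c c < pseudoInv φ s := by
      refine hφ.pseudoInv_lt ⟨hw0, pseudoInv_le_one⟩ ?_
      rw [hw, ← ENNReal.add_halves s, ← hv]
      exact ENNReal.add_lt_add hφc hφc
    filter_upwards [(hC c hc c hc).eventually_lt hs hlt] with i hi
    refine (hφs i).lt_pseudoInv hc (not_le.1 fun h => hi.not_ge (pseudoInv_antitone _ ?_))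
    simpa only [ENNReal.add_halves] using add_le_add h h
  · rcases lt_or_ge 1 c with hc1 | hc1
    · exact Eventually.of_forall fun i => pseudoInv_le_one.trans_lt hc1
    have hc : c ∈ Ioc (0:ℝ) 1 := ⟨(pseudoInv_nonneg _ _).trans_lt hvc, hc1⟩
    have hφc := hφ.strictAntiOn pseudoInv_mem_Icc (Ioc_subset_Icc_self hc) hvc
    have hlt : pseudoInv φ s < archCopula φ c c := by
      refine hφ.lt_pseudoInv pseudoInv_mem_Icc ?_
      rw [hw, ← ENNReal.add_halves s, ← hv]
      exact ENNReal.add_lt_add hφc hφc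
    filter_upwards [hs.eventually_lt (hC c (Ioc_subset_Icc_self hc) c (Ioc_subset_Icc_self hc)) hlt]
      with i hi
    refine (hφs i).pseudoInv_lt hc (not_le.1 fun h => hi.not_ge (pseudoInv_antitone _ ?_))
    simpa only [ENNReal.add_halves] using add_le_add h h

lemma tendsto_pseudoInv_dyadic (hφ : IsGenerator φ) (hφs : ∀ i, IsGenerator (φs i))
    (hC : ∀ x ∈ Icc (0:ℝ) 1, ∀ y ∈ Icc (0:ℝ) 1,
      Tendsto (fun i => archCopula (φs i) x y) l (𝓝 (archCopula φ x y)))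
    (k m : ℕ) :
    Tendsto (fun i => pseudoInv (φs i) (k * 2⁻¹ ^ m)) l (𝓝 (pseudoInv φ (k * 2⁻¹ ^ m))) := by
  have hunit : ∀ m : ℕ,
      Tendsto (fun i => pseudoInv (φs i) (2⁻¹ ^ m)) l (𝓝 (pseudoInv φ (2⁻¹ ^ m))) := by
    intro m
    induction m with
    | zero =>
      rw [pow_zero, hφ.pseudoInv_one]
      exact tendsto_const_nhds.congr fun i => (hφs i).pseudoInv_one.symm
    | succ m ih =>
      have hlt : (2⁻¹ : ℝ≥0∞) ^ m < φ 0 :=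
        (pow_le_one₀ zero_le (ENNReal.inv_le_one.2 one_le_two)).trans_lt hφ.one_lt_map_zero
      simpa only [pow_succ, ← div_eq_mul_inv] using tendsto_pseudoInv_div_two hφ hφs hC hlt ih
  induction k with
  | zero =>
    simp only [Nat.cast_zero, zero_mul, pseudoInv_zero]
    exact tendsto_const_nhds
  | succ k ih =>
    simpa only [Nat.cast_succ, add_one_mul] using tendsto_pseudoInv_add hφ hφs hC ih (hunit m)

lemma tendsto_of_tendsto_pseudoInv_dyadic (hφ : IsGenerator φ) (hφs : ∀ i, IsGenerator (φs i))
    (hA : ∀ k m : ℕ,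
      Tendsto (fun i => pseudoInv (φs i) (k * 2⁻¹ ^ m)) l (𝓝 (pseudoInv φ (k * 2⁻¹ ^ m))))
    {x : ℝ} (hx : x ∈ Ioc (0:ℝ) 1) : Tendsto (fun i => φs i x) l (𝓝 (φ x)) := by
  have hxI := Ioc_subset_Icc_self hx
  refine tendsto_order.2 ⟨fun a ha => ?_, fun b hb => ?_⟩
  · obtain ⟨k, m, hak, hkx⟩ := ENNReal.exists_nat_mul_inv_two_pow_btwn ha
    filter_upwards [(tendsto_order.1 (hA k m)).1 x (hφ.lt_pseudoInv hxI hkx)] with i hi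
    exact hak.trans_le
      (not_lt.1 fun h => hi.not_ge (pseudoInv_le (hφs i).strictAntiOn hxI h.le))
  · obtain ⟨k, m, hxk, hkb⟩ := ENNReal.exists_nat_mul_inv_two_pow_btwn hb
    filter_upwards [(tendsto_order.1 (hA k m)).2 x (hφ.pseudoInv_lt hx hxk)] with i hi
    exact (not_le.1 fun h => hi.not_ge (le_pseudoInv hxI h)).trans hkb

lemma tendsto_archCopula_of_tendsto (hφ : IsGenerator φ) (hφs : ∀ i, IsGenerator (φs i))
    (h : ∀ x ∈ Ioc (0:ℝ) 1, Tendsto (fun i => φs i x) l (𝓝 (φ x)))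
    {x y : ℝ} (hx : x ∈ Icc (0:ℝ) 1) (hy : y ∈ Icc (0:ℝ) 1) :
    Tendsto (fun i => archCopula (φs i) x y) l (𝓝 (archCopula φ x y)) := by
  by_cases hxy : x = 0 ∨ y = 0
  · rw [archCopula_eq_zero hφ.strictAntiOn hxy]
    exact tendsto_const_nhds.congr fun i => (archCopula_eq_zero (hφs i).strictAntiOn hxy).symm
  obtain ⟨hx0, hy0⟩ := not_or.1 hxy
  exact tendsto_pseudoInv hφ.strictAntiOn (fun i => (hφs i).strictAntiOn) h
    ((h x ⟨hx.1.lt_of_ne' hx0, hx.2⟩).add (h y ⟨hy.1.lt_of_ne' hy0, hy.2⟩))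

end ConvergenceOfGenerators

/-- For Archimedean copulas, pointwise convergence of the copulas on
`[0,1]²` is equivalent to pointwise convergence of the generators on `(0,1]`. -/
theorem stmt1 (φ : ℝ → ℝ≥0∞) (φseq : ℕ → ℝ → ℝ≥0∞)
    (hφ : IsGenerator φ) (hφseq : ∀ n, IsGenerator (φseq n)) :
    (∀ x ∈ Set.Icc (0:ℝ) 1, ∀ y ∈ Set.Icc (0:ℝ) 1,
        Filter.Tendsto (fun n => archCopula (φseq n) x y) Filter.atTop
          (nhds (archCopula φ x y)))
      ↔ (∀ x ∈ Set.Ioc (0:ℝ) 1,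
          Filter.Tendsto (fun n => φseq n x) Filter.atTop (nhds (φ x))) :=
  ⟨fun H _ hx => tendsto_of_tendsto_pseudoInv_dyadic hφ hφseq
      (tendsto_pseudoInv_dyadic hφ hφseq H) hx,
    fun H _ hx _ hy => tendsto_archCopula_of_tendsto hφ hφseq H hx hy⟩
end
end

section
/- Let C, C₁, C₂, … be Archimedean copulas with (normalized, right-continuous at 0) generators φ, φ₁, φ₂, … such that (φ_n) converges pointwise to φ on (0,1]. Then for every t ∈ (0,1) the t-level functions converge pointwise: lim_{n→∞} f_n^t(x) = f^t(x) for all x ∈ [t,1]. -/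
open MeasureTheory Filter Set
open scoped ENNReal

noncomputable section

private lemma pinv_ge {φ : ℝ → ℝ≥0∞} {s : ℝ≥0∞} {t : ℝ} (ht : t ∈ Set.Icc (0:ℝ) 1)
    (hs : s ≤ φ t) : t ≤ pseudoInv φ s :=
  le_csSup ⟨1, fun _ hx => hx.1.2⟩ ⟨ht, hs⟩

private lemma pinv_le_one {φ : ℝ → ℝ≥0∞} {s : ℝ≥0∞} : pseudoInv φ s ≤ 1 :=
  Real.sSup_le (fun _ hx => hx.1.2) zero_le_one

private lemma pinv_le {φ : ℝ → ℝ≥0∞} (hφ : IsGenerator φ) {s : ℝ≥0∞} {b : ℝ}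
    (hb : b ∈ Set.Icc (0:ℝ) 1) (hsb : φ b < s) : pseudoInv φ s ≤ b := by
  refine Real.sSup_le (fun u hu => ?_) hb.1
  by_contra h
  push_neg at h
  exact (hu.2.trans_lt ((hφ.strict_anti b hb u hu.1 h).trans hsb)).false

/-- For Archimedean copulas whose generators converge pointwise on
`(0,1]`, the `t`-level functions converge pointwise for every `t ∈ (0,1)`. -/
theorem stmt6 (φ : ℝ → ℝ≥0∞) (φseq : ℕ → ℝ → ℝ≥0∞)
    (hφ : IsGenerator φ) (hφseq : ∀ n, IsGenerator (φseq n))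
    (hconv : ∀ x ∈ Set.Ioc (0:ℝ) 1,
      Filter.Tendsto (fun n => φseq n x) Filter.atTop (nhds (φ x))) :
    ∀ t ∈ Set.Ioo (0:ℝ) 1, ∀ x ∈ Set.Icc t 1,
      Filter.Tendsto (fun n => levelFn (φseq n) t x) Filter.atTop
        (nhds (levelFn φ t x)) := by
  intro t ht x hx
  have ht0 : (0:ℝ) < t := ht.1
  have ht1 : t < 1 := ht.2
  have hx1 : x ≤ 1 := hx.2
  have hx0 : 0 < x := lt_of_lt_of_le ht0 hx.1
  set s : ℝ≥0∞ := φ t - φ x with hs_def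
  have hst : s ≤ φ t := tsub_le_self
  have hφt_fin : φ t < ⊤ := hφ.finite t ⟨ht0, ht1.le⟩
  have hsn : Tendsto (fun n => φseq n t - φseq n x) atTop (nhds s) :=
    ENNReal.Tendsto.sub (hconv t ⟨ht0, ht1.le⟩) (hconv x ⟨hx0, hx1⟩) (Or.inl hφt_fin.ne)
  set c : ℝ := levelFn φ t x with hc_def
  have hcs : c = sSup {u | u ∈ Set.Icc (0:ℝ) 1 ∧ s ≤ φ u} := rfl
  have hSne : {u | u ∈ Set.Icc (0:ℝ) 1 ∧ s ≤ φ u}.Nonempty :=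
    ⟨t, ⟨ht0.le, ht1.le⟩, hst⟩
  have hct : t ≤ c := pinv_ge ⟨ht0.le, ht1.le⟩ hst
  have hc1 : c ≤ 1 := pinv_le_one
  rw [tendsto_order]
  constructor
  · -- lower bounds
    intro a ha
    by_cases hat : a < t
    · filter_upwards with n
      exact lt_of_lt_of_le hat (pinv_ge ⟨ht0.le, ht1.le⟩ tsub_le_self)
    · push_neg at hat
      set a' : ℝ := (a + c) / 2 with ha'
      have haa' : a < a' := by simp only [ha']; linarith
      have ha'c : a' < c := by simp only [ha']; linarith
      have ha'0 : 0 < a' := lt_of_lt_of_le ht0 (hat.trans haa'.le)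
      have ha'1 : a' ≤ 1 := ha'c.le.trans hc1
      obtain ⟨v, hv, hv'⟩ := exists_lt_of_lt_csSup hSne (hcs ▸ ha'c)
      have hφa' : s < φ a' :=
        lt_of_le_of_lt hv.2 (hφ.strict_anti a' ⟨ha'0.le, ha'1⟩ v hv.1 hv')
      have hev : ∀ᶠ n in atTop, (φseq n t - φseq n x) < φseq n a' :=
        hsn.eventually_lt (hconv a' ⟨ha'0, ha'1⟩) hφa'
      filter_upwards [hev] with n hn
      exact lt_of_lt_of_le haa' (pinv_ge ⟨ha'0.le, ha'1⟩ hn.le)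
  · -- upper bounds
    intro b hb
    by_cases hb1 : 1 < b
    · filter_upwards with n
      exact lt_of_le_of_lt pinv_le_one hb1
    · push_neg at hb1
      set b' : ℝ := (c + b) / 2 with hb'
      have hcb' : c < b' := by simp only [hb']; linarith
      have hb'b : b' < b := by simp only [hb']; linarith
      have hb'0 : 0 < b' := lt_of_lt_of_le ht0 (hct.trans hcb'.le)
      have hb'1 : b' ≤ 1 := hb'b.le.trans hb1
      have hφb' : φ b' < s := by
        by_contra h
        push_neg at h
        exact absurd (le_csSup ⟨1, fun _ hu => hu.1.2⟩
          (show b' ∈ {u | u ∈ Set.Icc (0:ℝ) 1 ∧ s ≤ φ u} from ⟨⟨hb'0.le, hb'1⟩, h⟩))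
          (by rw [← hcs]; exact not_le.2 hcb')
      have hev : ∀ᶠ n in atTop, φseq n b' < (φseq n t - φseq n x) :=
        (hconv b' ⟨hb'0, hb'1⟩).eventually_lt hsn hφb'
      filter_upwards [hev] with n hn
      exact lt_of_le_of_lt (pinv_le (hφseq n) ⟨hb'0.le, hb'1⟩ hn) hb'b
end
end

section
/- Let C, C₁, C₂, … be Archimedean copulas with (normalized, right-continuous at 0) generators φ, φ₁, φ₂, … such that (φ_n) converges pointwise to φ on (0,1], and suppose C is non-strict (φ(0) < ∞). Then for every x ∈ Cont(D⁺φ) and every y with 0 < y < f^0(x) one has lim_{n→∞} K_{C_n}(x,[0,y]) = 0 = K_C(x,[0,y]). -/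
open MeasureTheory Filter Set
open scoped ENNReal

noncomputable section

/-
Since `y < f⁰(x)`, the limit generator satisfies `φ(0) < φ(x) + φ(y)`, so for small `ε > 0`
and large `n` there is a uniform gap `φₙ(ε) + β ≤ φₙ(x) + φₙ(y)`. Whenever the kernel of `Cₙ`
is not already `0`, one has `φₙ(Cₙ(x,y)) ≥ φₙ(x) + φₙ(y)`, so `Cₙ(x,y) < ε`, and the convexity
of `φₙ` forces `D⁺φₙ(Cₙ(x,y)) ≤ -β/ε`. Since `D⁺φₙ(x)` stays bounded, the kernel
`D⁺φₙ(x) / D⁺φₙ(Cₙ(x,y))` is eventually `O(ε)`.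
-/

lemma tendsto_zero_of_forall_eventually_abs_le {α : Type*} {l : Filter α} {u : α → ℝ} {C : ℝ}
    (h : ∀ ε ∈ Ioc (0:ℝ) 1, ∀ᶠ n in l, |u n| ≤ C * ε) : Tendsto u l (nhds 0) := by
  rw [Metric.tendsto_nhds]
  intro δ hδ
  have hC : 0 < |C| + 1 := by positivity
  set ε := min 1 (δ / (2 * (|C| + 1)))
  have hε : ε ∈ Ioc (0:ℝ) 1 := ⟨lt_min one_pos (by positivity), min_le_left _ _⟩
  have hεδ : (|C| + 1) * ε ≤ δ / 2 := by
    calc (|C| + 1) * ε ≤ (|C| + 1) * (δ / (2 * (|C| + 1))) := by gcongr; exact min_le_right _ _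
      _ = δ / 2 := by field_simp
  filter_upwards [h ε hε] with n hn
  rw [Real.dist_0_eq_abs]
  nlinarith [le_abs_self C, hε.1]

lemma ConvexOn.le_of_forall_Ioo_le {s : Set ℝ} {f : ℝ → ℝ} (hf : ConvexOn ℝ s f) {w c A : ℝ}
    (hw : w ∈ s) (hc : c ∈ s) (hwc : w < c) (h : ∀ t ∈ Ioo w c, A ≤ f t) : A ≤ f c := by
  have hlim : Tendsto (fun b : ℝ => (1 - b) * f w + b * f c) (nhdsWithin 1 (Iio 1))
      (nhds (f c)) := by
    have hcont : Continuous fun b : ℝ => (1 - b) * f w + b * f c := by fun_prop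
    simpa using (hcont.tendsto 1).mono_left nhdsWithin_le_nhds
  refine ge_of_tendsto hlim ?_
  filter_upwards [Ioo_mem_nhdsLT zero_lt_one] with b hb
  calc A ≤ f ((1 - b) * w + b * c) := h _ ⟨by nlinarith [hb.1, hb.2], by nlinarith [hb.1, hb.2]⟩
    _ ≤ (1 - b) * f w + b * f c := by
      simpa only [smul_eq_mul] using hf.2 hw hc (by linarith [hb.2]) hb.1.le (by ring)

lemma slope_le_rightD {s : Set ℝ} {f : ℝ → ℝ} (hf : ConvexOn ℝ s f) {w x : ℝ} (hw : w ∈ s)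
    (hs : (1:ℝ) ∈ s) (hwx : w < x) (hx : x < 1) : (f x - f w) / (x - w) ≤ rightD f x := by
  refine le_csInf ⟨_, ⟨1, ⟨hx, le_rfl⟩, rfl⟩⟩ ?_
  rintro - ⟨z, hz, rfl⟩
  exact hf.slope_mono_adjacent hw (hf.1.ordConnected.out hw hs ⟨by linarith [hz.1], hz.2⟩) hwx hz.1

lemma rightD_eq_zero_or_le_slope (f : ℝ → ℝ) {x z : ℝ} (hz : z ∈ Ioc x 1) :
    rightD f x = 0 ∨ rightD f x ≤ (f z - f x) / (z - x) := by
  by_cases hb : BddBelow ((fun y => (f y - f x) / (y - x)) '' Ioc x 1)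
  · exact .inr (csInf_le hb ⟨z, hz, rfl⟩)
  · exact .inl (Real.sInf_of_not_bddBelow hb)

lemma pseudoInv_mem (ψ : ℝ → ℝ≥0∞) (s : ℝ≥0∞) : pseudoInv ψ s ∈ Icc (0:ℝ) 1 :=
  ⟨Real.sSup_nonneg fun _ ht => ht.1.1, Real.sSup_le (fun _ ht => ht.1.2) zero_le_one⟩

lemma le_pseudoInv_s10 (ψ : ℝ → ℝ≥0∞) {s : ℝ≥0∞} {t : ℝ} (ht : t ∈ Icc (0:ℝ) 1) (h : s ≤ ψ t) :
    t ≤ pseudoInv ψ s :=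
  le_csSup ⟨1, fun _ hu => hu.1.2⟩ ⟨ht, h⟩

lemma apply_lt_of_pseudoInv_lt (ψ : ℝ → ℝ≥0∞) {s : ℝ≥0∞} {t : ℝ} (ht : t ∈ Icc (0:ℝ) 1)
    (h : pseudoInv ψ s < t) : ψ t < s :=
  lt_of_not_ge fun hs => (le_pseudoInv_s10 ψ ht hs).not_gt h

lemma archKernel_of_lt_levelFn (ψ : ℝ → ℝ≥0∞) {x y : ℝ} (hx : x ∈ Ioo (0:ℝ) 1)
    (h : y < levelFn ψ 0 x) : archKernel ψ x y = 0 := by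
  rw [archKernel, if_neg (by rintro (rfl | rfl) <;> simp at hx), if_pos h]

lemma archKernel_of_levelFn_le (ψ : ℝ → ℝ≥0∞) {x y : ℝ} (hx : x ∈ Ioo (0:ℝ) 1)
    (h : levelFn ψ 0 x ≤ y) :
    archKernel ψ x y = Dplus ψ x / Dplus ψ (archCopula ψ x y) := by
  rw [archKernel, if_neg (by rintro (rfl | rfl) <;> simp at hx), if_neg h.not_gt]

namespace IsGenerator

variable {ψ : ℝ → ℝ≥0∞}

lemma anti (hψ : IsGenerator ψ) {a b : ℝ} (ha : a ∈ Icc (0:ℝ) 1) (hb : b ∈ Icc (0:ℝ) 1)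
    (hab : a ≤ b) : ψ b ≤ ψ a := by
  rcases hab.eq_or_lt with rfl | h
  · exact le_rfl
  · exact (hψ.strict_anti a ha b hb h).le

lemma ne_top (hψ : IsGenerator ψ) {t : ℝ} (ht : t ∈ Ioc (0:ℝ) 1) : ψ t ≠ ⊤ :=
  (hψ.finite t ht).ne

lemma convexOn (hψ : IsGenerator ψ) : ConvexOn ℝ (Ioc (0:ℝ) 1) (fun t => (ψ t).toReal) := by
  refine ⟨convex_Ioc 0 1, fun a ha b hb p q hp hq hpq => ?_⟩
  obtain rfl : q = 1 - p := by linarith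
  have hna := hψ.ne_top ha
  have hnb := hψ.ne_top hb
  have h := ENNReal.toReal_mono (by finiteness)
    (hψ.convex a ⟨ha.1.le, ha.2⟩ b ⟨hb.1.le, hb.2⟩ p ⟨hp, by linarith⟩)
  rwa [ENNReal.toReal_add (by finiteness) (by finiteness), ENNReal.toReal_mul,
    ENNReal.toReal_mul, ENNReal.toReal_ofReal hp, ENNReal.toReal_ofReal hq] at h

lemma abs_Dplus_le (hψ : IsGenerator ψ) {w x : ℝ} (hw : w ∈ Ioo 0 x) (hx : x ∈ Ioo (0:ℝ) 1) :
    |Dplus ψ x| ≤ ((ψ w).toReal - (ψ x).toReal) / (x - w) := by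
  have hlow : ((ψ x).toReal - (ψ w).toReal) / (x - w) ≤ Dplus ψ x :=
    slope_le_rightD hψ.convexOn ⟨hw.1, hw.2.le.trans hx.2.le⟩ ⟨one_pos, le_rfl⟩ hw.2 hx.2
  have hnonpos : Dplus ψ x ≤ 0 := by
    rcases rightD_eq_zero_or_le_slope (fun t => (ψ t).toReal) ⟨hx.2, le_rfl⟩ with h | h
    · exact h.le
    · refine h.trans (div_nonpos_of_nonpos_of_nonneg ?_ (by linarith [hx.2]))
      simp [hψ.map_one]
  rw [abs_of_nonpos hnonpos, neg_le, ← neg_div, neg_sub]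
  exact hlow

lemma pseudoInv_pos (hψ : IsGenerator ψ) {s : ℝ≥0∞} (hs : s < ψ 0) : 0 < pseudoInv ψ s := by
  obtain ⟨t, hst, ht⟩ := ((hψ.rightCont_zero.eventually (lt_mem_nhds hs)).and
    (Ioc_mem_nhdsGT zero_lt_one)).exists
  exact ht.1.trans_le (le_pseudoInv_s10 ψ ⟨ht.1.le, ht.2⟩ hst.le)

lemma le_apply_of_lt_pseudoInv (hψ : IsGenerator ψ) {s : ℝ≥0∞} {t : ℝ} (ht : 0 ≤ t)
    (h : t < pseudoInv ψ s) : s ≤ ψ t := by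
  have hne : {x | x ∈ Icc (0:ℝ) 1 ∧ s ≤ ψ x}.Nonempty := by
    by_contra hemp
    rw [not_nonempty_iff_eq_empty] at hemp
    rw [pseudoInv, hemp, Real.sSup_empty] at h
    linarith
  obtain ⟨u, hu, htu⟩ := exists_lt_of_lt_csSup hne h
  exact hu.2.trans (hψ.anti ⟨ht, htu.le.trans hu.1.2⟩ hu.1 htu.le)

lemma toReal_le_apply_pseudoInv (hψ : IsGenerator ψ) {s : ℝ≥0∞} (hs : s ≤ ψ 0) (hs' : s ≠ ⊤) :
    s.toReal ≤ (ψ (pseudoInv ψ s)).toReal := by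
  set c := pseudoInv ψ s
  have hc := pseudoInv_mem ψ s
  rcases hc.1.eq_or_lt with hc0 | hc0
  · have hψ0 : ψ 0 ≠ ⊤ := fun htop =>
      (hψ.pseudoInv_pos (hs'.lt_top.trans_eq htop.symm)).ne' hc0.symm
    rw [show c = 0 from hc0.symm]
    exact ENNReal.toReal_mono hψ0 hs
  · refine hψ.convexOn.le_of_forall_Ioo_le (w := c / 2) ⟨by linarith, by linarith [hc.2]⟩
      ⟨hc0, hc.2⟩ (by linarith) fun t ht => ?_
    exact ENNReal.toReal_mono (hψ.ne_top ⟨by linarith [ht.1], by linarith [ht.2, hc.2]⟩)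
      (hψ.le_apply_of_lt_pseudoInv (by linarith [ht.1]) ht.2)

lemma lt_add_of_lt_levelFn (hψ : IsGenerator ψ) {x y : ℝ} (hx : x ∈ Ioc (0:ℝ) 1) (hy : 0 ≤ y)
    (h : y < levelFn ψ 0 x) : ψ 0 < ψ x + ψ y := by
  have hL : levelFn ψ 0 x ≤ 1 := (pseudoInv_mem ψ _).2
  set t := (y + levelFn ψ 0 x) / 2 with ht
  have hyt : y < t := by linarith
  have hlt : ψ 0 - ψ x < ψ y :=
    (hψ.le_apply_of_lt_pseudoInv (by linarith) (by linarith : t < levelFn ψ 0 x)).trans_lt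
      (hψ.strict_anti y ⟨hy, by linarith⟩ t ⟨by linarith, by linarith⟩ hyt)
  calc ψ 0 ≤ ψ x + (ψ 0 - ψ x) := le_add_tsub
    _ < ψ x + ψ y := ENNReal.add_lt_add_left (hψ.ne_top hx) hlt

lemma add_le_of_levelFn_le (hψ : IsGenerator ψ) {x y : ℝ} (hx : x ∈ Icc (0:ℝ) 1)
    (hy : y ∈ Ioo (0:ℝ) 1) (h : levelFn ψ 0 x ≤ y) : ψ x + ψ y ≤ ψ 0 := by
  by_cases hψ0 : ψ 0 = ⊤
  · simp [hψ0]
  have hA : ψ 0 - ψ x ≠ ⊤ := (tsub_le_self.trans_lt (lt_top_iff_ne_top.2 hψ0)).ne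
  have hcont : ContinuousAt (fun t => (ψ t).toReal) y :=
    hψ.convexOn.continuousOn_interior.continuousAt
      (isOpen_interior.mem_nhds (by rwa [interior_Ioc]))
  have hyA : (ψ y).toReal ≤ (ψ 0 - ψ x).toReal := by
    refine le_of_tendsto (hcont.mono_left (nhdsWithin_le_nhds (s := Ioi y))) ?_
    filter_upwards [Ioc_mem_nhdsGT hy.2] with t ht
    exact ENNReal.toReal_mono hA
      (apply_lt_of_pseudoInv_lt ψ ⟨by linarith [hy.1, ht.1], ht.2⟩ (h.trans_lt ht.1)).le
  calc ψ x + ψ y ≤ ψ x + (ψ 0 - ψ x) :=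
        add_le_add le_rfl ((ENNReal.toReal_le_toReal (hψ.ne_top ⟨hy.1, hy.2.le⟩) hA).1 hyA)
    _ = ψ 0 := add_tsub_cancel_of_le (hψ.anti ⟨le_rfl, zero_le_one⟩ hx hx.1)

theorem abs_archKernel_le (hψ : IsGenerator ψ) {x y ε β : ℝ} (hx : x ∈ Ioo (0:ℝ) 1)
    (hy : y ∈ Ioo (0:ℝ) 1) (hε : ε ∈ Ioc (0:ℝ) 1) (hβ : 0 < β)
    (hgap : (ψ ε).toReal + β ≤ (ψ x).toReal + (ψ y).toReal) :
    |archKernel ψ x y| ≤ |Dplus ψ x| * ε / β := by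
  rcases lt_or_ge y (levelFn ψ 0 x) with hyL | hyL
  · rw [archKernel_of_lt_levelFn ψ hx hyL, abs_zero]
    have := hε.1
    positivity
  rw [archKernel_of_levelFn_le ψ hx hyL]
  set c := archCopula ψ x y
  have hc : c ∈ Icc (0:ℝ) 1 := pseudoInv_mem ψ _
  have hxne := hψ.ne_top ⟨hx.1, hx.2.le⟩
  have hyne := hψ.ne_top ⟨hy.1, hy.2.le⟩
  have hgc : (ψ x).toReal + (ψ y).toReal ≤ (ψ c).toReal := by
    rw [← ENNReal.toReal_add hxne hyne]
    exact hψ.toReal_le_apply_pseudoInv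
      (hψ.add_le_of_levelFn_le ⟨hx.1.le, hx.2.le⟩ hy hyL) (by finiteness)
  have hcε : c < ε := by
    by_contra! h
    have := ENNReal.toReal_mono (hψ.ne_top hε) (hψ.anti ⟨hε.1.le, hε.2⟩ hc h)
    linarith
  have hβε : 0 < β / ε := div_pos hβ hε.1
  rcases rightD_eq_zero_or_le_slope (fun t => (ψ t).toReal) ⟨hcε, hε.2⟩ with h0 | hslope
  · rw [show Dplus ψ c = 0 from h0, div_zero, abs_zero]
    have := hε.1
    positivity
  have hDc : Dplus ψ c ≤ -(β / ε) :=
    calc Dplus ψ c ≤ ((ψ ε).toReal - (ψ c).toReal) / (ε - c) := hslope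
      _ ≤ -β / (ε - c) := div_le_div_of_nonneg_right (by linarith) (by linarith)
      _ ≤ -(β / ε) := by
        rw [neg_div, neg_le_neg_iff]
        exact div_le_div_of_nonneg_left hβ.le (by linarith) (by linarith [hc.1])
  rw [abs_div]
  calc |Dplus ψ x| / |Dplus ψ c| ≤ |Dplus ψ x| / (β / ε) :=
        div_le_div_of_nonneg_left (abs_nonneg _) hβε (by rw [abs_of_neg (by linarith)]; linarith)
    _ = |Dplus ψ x| * ε / β := div_div_eq_mul_div _ _ _

end IsGenerator

lemma eventually_abs_Dplus_le {ψ : ℝ → ℝ≥0∞} {ψseq : ℕ → ℝ → ℝ≥0∞}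
    (hψseq : ∀ n, IsGenerator (ψseq n))
    (hconv : ∀ t ∈ Ioc (0:ℝ) 1,
      Tendsto (fun n => (ψseq n t).toReal) atTop (nhds (ψ t).toReal))
    {x : ℝ} (hx : x ∈ Ioo (0:ℝ) 1) : ∃ M, ∀ᶠ n in atTop, |Dplus (ψseq n) x| ≤ M := by
  have hw : x / 2 ∈ Ioo 0 x := ⟨by linarith [hx.1], by linarith [hx.1]⟩
  have hlim := ((hconv _ ⟨hw.1, by linarith [hx.2]⟩).sub (hconv x ⟨hx.1, hx.2.le⟩)).div_const
    (x - x / 2)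
  refine ⟨((ψ (x / 2)).toReal - (ψ x).toReal) / (x - x / 2) + 1, ?_⟩
  filter_upwards [hlim.eventually (gt_mem_nhds (lt_add_one _))] with n hn
  exact ((hψseq n).abs_Dplus_le hw hx).trans hn.le

theorem stmt10_general (φ : ℝ → ℝ≥0∞) (φseq : ℕ → ℝ → ℝ≥0∞)
    (hφ : IsGenerator φ) (hφseq : ∀ n, IsGenerator (φseq n))
    (hconv : ∀ x ∈ Set.Ioc (0:ℝ) 1,
      Filter.Tendsto (fun n => φseq n x) Filter.atTop (nhds (φ x))) :
    ∀ x ∈ ContD φ, ∀ y : ℝ, 0 < y → y < levelFn φ 0 x →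
      Filter.Tendsto (fun n => archKernel (φseq n) x y) Filter.atTop (nhds 0) ∧
        archKernel φ x y = 0 := by
  rintro x ⟨hx, -⟩ y hy0 hyL
  refine ⟨?_, archKernel_of_lt_levelFn φ hx hyL⟩
  have hy : y ∈ Ioo (0:ℝ) 1 := ⟨hy0, hyL.trans_le (pseudoInv_mem φ _).2⟩
  have hconvR : ∀ t ∈ Ioc (0:ℝ) 1,
      Tendsto (fun n => (φseq n t).toReal) atTop (nhds (φ t).toReal) := fun t ht =>
    (ENNReal.tendsto_toReal (hφ.ne_top ht)).comp (hconv t ht)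
  obtain ⟨M, hM⟩ := eventually_abs_Dplus_le hφseq hconvR hx
  have hgap := hφ.lt_add_of_lt_levelFn ⟨hx.1, hx.2.le⟩ hy0.le hyL
  have hsum : φ x + φ y ≠ ⊤ := by
    have := hφ.ne_top ⟨hx.1, hx.2.le⟩
    have := hφ.ne_top ⟨hy.1, hy.2.le⟩
    finiteness
  have hφ0 : φ 0 ≠ ⊤ := ne_top_of_lt hgap
  set β := ((φ x).toReal + (φ y).toReal - (φ 0).toReal) / 2 with hβdef
  have hβ : 0 < β := by
    have := (ENNReal.toReal_lt_toReal hφ0 hsum).2 hgap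
    rw [ENNReal.toReal_add (hφ.ne_top ⟨hx.1, hx.2.le⟩) (hφ.ne_top ⟨hy.1, hy.2.le⟩)] at this
    linarith
  refine tendsto_zero_of_forall_eventually_abs_le (C := M / β) fun ε hε => ?_
  have hφε := ENNReal.toReal_mono hφ0 (hφ.anti ⟨le_rfl, zero_le_one⟩ ⟨hε.1.le, hε.2⟩ hε.1.le)
  have hlim := ((hconvR x ⟨hx.1, hx.2.le⟩).add (hconvR y ⟨hy.1, hy.2.le⟩)).sub (hconvR ε hε)
  filter_upwards [hM, hlim.eventually (lt_mem_nhds (show β < _ by linarith))] with n hDn hn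
  calc |archKernel (φseq n) x y| ≤ |Dplus (φseq n) x| * ε / β :=
        (hφseq n).abs_archKernel_le hx hy hε hβ (by linarith)
    _ ≤ M * ε / β := by gcongr; exact hε.1.le
    _ = M / β * ε := by ring

/-- For Archimedean copulas whose generators converge pointwise on
`(0,1]`, with non-strict limit (`φ(0) < ∞`): for every `x ∈ Cont(D⁺φ)` and every `y` with
`0 < y < f⁰(x)` one has `K_{C_n}(x,[0,y]) → 0 = K_C(x,[0,y])`. -/
theorem stmt10 (φ : ℝ → ℝ≥0∞) (φseq : ℕ → ℝ → ℝ≥0∞)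
    (hφ : IsGenerator φ) (hφseq : ∀ n, IsGenerator (φseq n))
    (hns : φ 0 < ⊤)
    (hconv : ∀ x ∈ Set.Ioc (0:ℝ) 1,
      Filter.Tendsto (fun n => φseq n x) Filter.atTop (nhds (φ x))) :
    ∀ x ∈ ContD φ, ∀ y : ℝ, 0 < y → y < levelFn φ 0 x →
      Filter.Tendsto (fun n => archKernel (φseq n) x y) Filter.atTop (nhds 0) ∧
        archKernel φ x y = 0 :=
  stmt10_general φ φseq hφ hφseq hconv
end
end
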